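/- arXiv:2504.08539 — 11 statements merged into one kernel-verified Lean document; each statement's English description precedes it below -/
import Mathlib

section
/- Let φ : Γ₂ → Γ₁ be a non-constant harmonic morphism of connected graphs with vertex map matrix Φ, adjacency matrices A₁, A₂, horizontal multiplicity matrix D_μ, and vertical multiplicity matrix D_ν. Then A₂Φ = D_νΦ + D_μΦA₁. -/
open Matrix Finset

section Defs

variable {V V₁ V₂ : Type*}

/-- The zero-one vertex map matrix of a vertex map `φ`. -/
def vertexMapMatrix [DecidableEq V₁] (φ : V₂ → V₁) : Matrix V₂ V₁ ℤ :=
  Matrix.of fun v x => if φ v = x then 1 else 0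

/-- A graph morphism: each edge collapses to a vertex or maps to an edge. -/
def IsGraphMorphism (G₂ : SimpleGraph V₂) (G₁ : SimpleGraph V₁) (φ : V₂ → V₁) : Prop :=
  ∀ ⦃v w⦄, G₂.Adj v w → φ v = φ w ∨ G₁.Adj (φ v) (φ w)

/-- The vertical multiplicity `ν(v)`: number of vertical edges incident to `v`. -/
def vertMult [Fintype V₂] [DecidableEq V₁] (G₂ : SimpleGraph V₂) [DecidableRel G₂.Adj]
    (φ : V₂ → V₁) (v : V₂) : ℕ :=
  (Finset.univ.filter fun w => G₂.Adj v w ∧ φ w = φ v).card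

/-- Local horizontal multiplicity `μ_φ(v,x)`: number of edges at `v` mapping to the
edge `(φ v, x)`. -/
def locHorizMult [Fintype V₂] [DecidableEq V₁] (G₂ : SimpleGraph V₂) [DecidableRel G₂.Adj]
    (φ : V₂ → V₁) (v : V₂) (x : V₁) : ℕ :=
  (Finset.univ.filter fun w => G₂.Adj v w ∧ φ w = x).card

/-- `φ` is a harmonic morphism with horizontal multiplicity function `μ`. -/
def IsHarmonicMorphism [Fintype V₂] [DecidableEq V₁] (G₂ : SimpleGraph V₂)
    [DecidableRel G₂.Adj] (G₁ : SimpleGraph V₁) (φ : V₂ → V₁) (μ : V₂ → ℕ) : Prop :=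
  IsGraphMorphism G₂ G₁ φ ∧ ∀ v x, G₁.Adj (φ v) x → locHorizMult G₂ φ v x = μ v

/-- `d` is the degree of `φ`: every edge of `Γ₁` has exactly `d` preimage edges. -/
def IsDegreeOf [Fintype V₂] [DecidableEq V₁] (G₂ : SimpleGraph V₂) [DecidableRel G₂.Adj]
    (G₁ : SimpleGraph V₁) (φ : V₂ → V₁) (d : ℕ) : Prop :=
  ∀ ⦃x y⦄, G₁.Adj x y →
    (Finset.univ.filter fun p : V₂ × V₂ => G₂.Adj p.1 p.2 ∧ φ p.1 = x ∧ φ p.2 = y).card = d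

/-- The arithmetical Laplacian `L = Diag(S) − A`. -/
def arithLaplacian [Fintype V] [DecidableEq V] (G : SimpleGraph V) [DecidableRel G.Adj]
    (S : V → ℤ) : Matrix V V ℤ :=
  Matrix.diagonal S - G.adjMatrix ℤ

/-- An arithmetical structure `(R,S)` on `G`. -/
def IsArithStructure [Fintype V] [DecidableEq V] (G : SimpleGraph V) [DecidableRel G.Adj]
    (R S : V → ℤ) : Prop :=
  (∀ v, 0 < R v) ∧ (∀ v, 0 < S v) ∧ Finset.univ.gcd R = 1 ∧
    arithLaplacian G S *ᵥ R = 0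

end Defs

/-- Melles–Joyner adjacency identity. For a non-constant harmonic
morphism `φ : Γ₂ → Γ₁` of connected graphs, `A₂Φ = D_νΦ + D_μΦA₁`. -/
theorem harmonic_adjacency_identity {V₁ V₂ : Type*} [Fintype V₁] [Fintype V₂]
    [DecidableEq V₁] [DecidableEq V₂]
    (G₁ : SimpleGraph V₁) [DecidableRel G₁.Adj] (G₂ : SimpleGraph V₂) [DecidableRel G₂.Adj]
    (hconn₁ : G₁.Connected) (hconn₂ : G₂.Connected)
    (hcard₁ : 2 ≤ Fintype.card V₁) (hcard₂ : 2 ≤ Fintype.card V₂)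
    (φ : V₂ → V₁) (μ : V₂ → ℕ)
    (hharm : IsHarmonicMorphism G₂ G₁ φ μ)
    (hnc : ∃ v w : V₂, φ v ≠ φ w) :
    G₂.adjMatrix ℤ * vertexMapMatrix φ =
      Matrix.diagonal (fun v => (vertMult G₂ φ v : ℤ)) * vertexMapMatrix φ +
        Matrix.diagonal (fun v => (μ v : ℤ)) * vertexMapMatrix φ * G₁.adjMatrix ℤ := by
  
  obtain ⟨hmor, hloc⟩ := hharm
  ext v x
  have lhs : (G₂.adjMatrix ℤ * vertexMapMatrix φ) v x
      = (locHorizMult G₂ φ v x : ℤ) := by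
    simp only [Matrix.mul_apply, vertexMapMatrix, Matrix.of_apply,
      SimpleGraph.adjMatrix_apply, locHorizMult]
    rw [Finset.card_filter]
    push_cast
    rw [Finset.sum_congr rfl]
    intro w _
    by_cases h1 : G₂.Adj v w <;> by_cases h2 : φ w = x <;> simp [h1, h2]
  rw [lhs]
  simp only [Matrix.add_apply, Matrix.mul_apply, Matrix.diagonal_apply, ite_mul, zero_mul,
    Finset.sum_ite_eq, Finset.mem_univ, if_true, vertexMapMatrix, Matrix.of_apply,
    SimpleGraph.adjMatrix_apply]
  rw [Finset.sum_eq_single (φ v)]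
  · by_cases hx : φ v = x
    · subst hx
      have : ¬ G₁.Adj (φ v) (φ v) := G₁.irrefl
      simp only [if_pos rfl, if_neg this, mul_one, mul_zero, mul_zero, add_zero]
      congr 1
      simp [locHorizMult, vertMult]
    · by_cases hadj : G₁.Adj (φ v) x
      · rw [hloc v x hadj]
        simp [hx, hadj, hx]
      · have : locHorizMult G₂ φ v x = 0 := by
          rw [locHorizMult, Finset.card_eq_zero, Finset.filter_eq_empty_iff]
          rintro w - ⟨haw, hwx⟩
          rcases hmor haw with h | h
          · exact hx (h ▸ hwx)
          · exact hadj (hwx ▸ h)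
        simp [this, hx, hadj]
  · intro b _ hb
    simp [Ne.symm hb]
  · simp
end

section
/- A non-constant harmonic morphism of connected graphs is surjective on vertices and on edges. -/
open Matrix Finset

/-- A non-constant harmonic morphism of connected graphs is surjective
on vertices and on edges. -/
theorem harmonic_morphism_surjective {V₁ V₂ : Type*} [Fintype V₁] [Fintype V₂]
    [DecidableEq V₁] [DecidableEq V₂]
    (G₁ : SimpleGraph V₁) [DecidableRel G₁.Adj] (G₂ : SimpleGraph V₂) [DecidableRel G₂.Adj]
    (hconn₁ : G₁.Connected) (hconn₂ : G₂.Connected)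
    (hcard₁ : 2 ≤ Fintype.card V₁) (hcard₂ : 2 ≤ Fintype.card V₂)
    (φ : V₂ → V₁) (μ : V₂ → ℕ)
    (hharm : IsHarmonicMorphism G₂ G₁ φ μ)
    (hnc : ∃ v w : V₂, φ v ≠ φ w) :
    Function.Surjective φ ∧
      ∀ x y : V₁, G₁.Adj x y → ∃ v w : V₂, G₂.Adj v w ∧ φ v = x ∧ φ w = y := by
  obtain ⟨hmor, hμ⟩ := hharm
  have mupos : ∀ c d, G₂.Adj c d → φ c ≠ φ d → 0 < μ c := by
    intro c d h hne
    have hadj : G₁.Adj (φ c) (φ d) := (hmor h).resolve_left hne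
    have h1 := hμ c (φ d) hadj
    rw [← h1, locHorizMult, Finset.card_pos]
    exact ⟨d, by simp [h]⟩
  have step : ∀ {x y : V₁}, G₁.Adj x y → ∀ v, φ v = x → 0 < μ v →
      ∃ w, G₂.Adj v w ∧ φ w = y ∧ 0 < μ w := by
    intro x y hxy v hv hμv
    have hadj : G₁.Adj (φ v) y := hv ▸ hxy
    have h1 := hμ v y hadj
    have h2 : 0 < locHorizMult G₂ φ v y := h1 ▸ hμv
    rw [locHorizMult, Finset.card_pos] at h2
    obtain ⟨w, hw⟩ := h2
    simp only [Finset.mem_filter, Finset.mem_univ, true_and] at hw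
    refine ⟨w, hw.1, hw.2, ?_⟩
    exact mupos w v hw.1.symm (by rw [hw.2, hv]; exact hxy.ne')
  have key : ∀ {a b : V₂} (p : G₂.Walk a b), φ a ≠ φ b →
      ∃ c d, G₂.Adj c d ∧ φ c ≠ φ d := by
    intro a b p
    induction p with
    | nil => intro h; exact absurd rfl h
    | @cons u x b h p ih =>
      intro hne
      by_cases hc : φ u = φ x
      · exact ih (fun h2 => hne (hc.trans h2))
      · exact ⟨u, x, h, hc⟩
  obtain ⟨v0, w0, hvw⟩ := hnc
  obtain ⟨p0⟩ := hconn₂ v0 w0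
  obtain ⟨a, b, hab, habne⟩ := key p0 hvw
  have ha : 0 < μ a := mupos a b hab habne
  have walkprop : ∀ {x y : V₁} (p : G₁.Walk x y),
      (∃ v, φ v = x ∧ 0 < μ v) → ∃ v, φ v = y ∧ 0 < μ v := by
    intro x y p
    induction p with
    | nil => exact id
    | cons h p ih =>
      rintro ⟨v, hv, hμv⟩
      obtain ⟨w, _, hw2, hw3⟩ := step h v hv hμv
      exact ih ⟨w, hw2, hw3⟩
  have all : ∀ x : V₁, ∃ v, φ v = x ∧ 0 < μ v := by
    intro x
    obtain ⟨p⟩ := hconn₁ (φ a) x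
    exact walkprop p ⟨a, rfl, ha⟩
  constructor
  · intro x
    obtain ⟨v, hv, _⟩ := all x
    exact ⟨v, hv⟩
  · intro x y hxy
    obtain ⟨v, hv, hμv⟩ := all x
    obtain ⟨w, hw1, hw2, _⟩ := step hxy v hv hμv
    exact ⟨v, w, hw1, hv, hw2⟩
end

section
/- Let φ : Γ₂ → Γ₁ be a non-constant harmonic morphism of connected graphs and let (R₁, S₁) be an arithmetical structure on Γ₁. Define R₂(v) = R₁(φ(v)) and S₂(v) = μ(v)S₁(φ(v)) + ν(v). Then the arithmetical Laplacians satisfy L₂Φ = D_μΦL₁, where Lᵢ = Diag(Sᵢ) − Aᵢ. -/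
open Matrix Finset

/-- Theorem `harmonic-L-identity`, Laplacian identity.
`L₂Φ = D_μΦL₁` for the pullback structure `S₂(v) = μ(v)S₁(φ(v)) + ν(v)`. -/
theorem harmonic_laplacian_identity {V₁ V₂ : Type*} [Fintype V₁] [Fintype V₂]
    [DecidableEq V₁] [DecidableEq V₂]
    (G₁ : SimpleGraph V₁) [DecidableRel G₁.Adj] (G₂ : SimpleGraph V₂) [DecidableRel G₂.Adj]
    (hconn₁ : G₁.Connected) (hconn₂ : G₂.Connected)
    (hcard₁ : 2 ≤ Fintype.card V₁) (hcard₂ : 2 ≤ Fintype.card V₂)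
    (φ : V₂ → V₁) (μ : V₂ → ℕ)
    (hharm : IsHarmonicMorphism G₂ G₁ φ μ)
    (hnc : ∃ v w : V₂, φ v ≠ φ w)
    (R₁ S₁ : V₁ → ℤ) (hA₁ : IsArithStructure G₁ R₁ S₁) :
    arithLaplacian G₂ (fun v => (μ v : ℤ) * S₁ (φ v) + (vertMult G₂ φ v : ℤ)) *
        vertexMapMatrix φ =
      Matrix.diagonal (fun v => (μ v : ℤ)) * vertexMapMatrix φ *
        arithLaplacian G₁ S₁ := by
  classical
  obtain ⟨hmor, hmu⟩ := hharm
  ext v x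
  rw [Matrix.mul_apply, Matrix.mul_apply]
  simp only [arithLaplacian, Matrix.sub_apply, Matrix.diagonal_apply,
    SimpleGraph.adjMatrix_apply, vertexMapMatrix, Matrix.of_apply,
    Matrix.diagonal_mul, sub_mul, Finset.sum_sub_distrib]
  have h1 : ∑ w, (if v = w then (μ v : ℤ) * S₁ (φ v) + (vertMult G₂ φ v : ℤ) else 0) *
      (if φ w = x then 1 else 0)
      = if φ v = x then (μ v : ℤ) * S₁ (φ v) + (vertMult G₂ φ v : ℤ) else 0 := by
    rw [Finset.sum_eq_single v]
    · simp
    · intro w _ hw; simp [Ne.symm hw]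
    · simp
  have h2 : ∑ w, (if G₂.Adj v w then (1:ℤ) else 0) * (if φ w = x then 1 else 0)
      = (locHorizMult G₂ φ v x : ℤ) := by
    rw [locHorizMult, Finset.card_filter]
    push_cast
    refine Finset.sum_congr rfl fun w _ => ?_
    by_cases h : G₂.Adj v w <;> by_cases h' : φ w = x <;> simp [h, h']
  have h3 : ∑ y, (μ v : ℤ) * (if φ v = y then 1 else 0) * (if y = x then S₁ y else 0)
      = (μ v : ℤ) * (if φ v = x then S₁ x else 0) := by
    rw [Finset.sum_eq_single x]
    · by_cases h : φ v = x <;> simp [h]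
    · intro y _ hy; simp [hy]
    · simp
  have h4 : ∑ y, (μ v : ℤ) * (if φ v = y then 1 else 0) * (if G₁.Adj y x then 1 else 0)
      = (μ v : ℤ) * (if G₁.Adj (φ v) x then 1 else 0) := by
    rw [Finset.sum_eq_single (φ v)]
    · simp
    · intro y _ hy; simp [Ne.symm hy]
    · simp
  simp only [mul_sub, Finset.sum_sub_distrib]
  rw [h1, h2, h3, h4]
  by_cases hx : φ v = x
  · subst hx
    have hν : locHorizMult G₂ φ v (φ v) = vertMult G₂ φ v := by
      unfold locHorizMult vertMult; rfl
    simp [hν, G₁.irrefl]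
  · simp only [if_neg hx]
    by_cases hadj : G₁.Adj (φ v) x
    · rw [hmu v x hadj]; simp [hadj]
    · have : locHorizMult G₂ φ v x = 0 := by
        rw [locHorizMult, Finset.card_eq_zero]
        ext w
        simp only [Finset.mem_filter, Finset.mem_univ, true_and, Finset.notMem_empty,
          iff_false, not_and]
        intro haw hwx
        rcases hmor haw with h | h
        · exact hx (h ▸ hwx)
        · exact hadj (hwx ▸ h)
      simp [this, hadj]
end

section
/- Let φ : Γ₂ → Γ₁ be a non-constant harmonic morphism of connected graphs and (R₁, S₁) an arithmetical structure on Γ₁. Then the pullback pair R₂ = ΦR₁, S₂ = D_μΦS₁ + ν is an arithmetical structure on Γ₂; in particular gcd of the entries of R₂ is 1, R₂ and S₂ are positive, and L₂R₂ = 0 where L₂ = Diag(S₂) − A₂. -/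
open Matrix Finset

section Aux

variable {V V₁ V₂ : Type*}

private lemma exists_adj_of_connected [Fintype V] {G : SimpleGraph V}
    (h : G.Connected) (hc : 2 ≤ Fintype.card V) (v : V) : ∃ w, G.Adj v w := by
  obtain ⟨w, hw⟩ := Fintype.exists_ne_of_one_lt_card hc v
  obtain ⟨p⟩ := h v w
  cases p with
  | nil => exact absurd rfl hw
  | cons h' _ => exact ⟨_, h'⟩

private lemma exists_crossing {G₂ : SimpleGraph V₂} {φ : V₂ → V₁}
    {u t : V₂} (p : G₂.Walk u t) (x : V₁) :
    φ u = x → φ t ≠ x → ∃ a b, G₂.Adj a b ∧ φ a = x ∧ φ b ≠ x := by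
  induction p with
  | nil => intro hu ht; exact absurd hu ht
  | @cons a b c h q ih =>
    intro hu ht
    by_cases hc : φ b = x
    · exact ih hc ht
    · exact ⟨a, b, h, hu, hc⟩

private lemma image_walk {G₁ : SimpleGraph V₁} {φ : V₂ → V₁}
    (hstep : ∀ x y, (∃ v, φ v = x) → G₁.Adj x y → ∃ w, φ w = y)
    {x y : V₁} (p : G₁.Walk x y) : (∃ v, φ v = x) → ∃ w, φ w = y := by
  induction p with
  | nil => exact id
  | @cons a b c h q ih => exact fun hx => ih (hstep a b hx h)

end Aux

/-- The pullback pair `R₂ = ΦR₁`, `S₂ = D_μΦS₁ + ν` is an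
arithmetical structure on `Γ₂`. -/
theorem pullback_is_arith_structure {V₁ V₂ : Type*} [Fintype V₁] [Fintype V₂]
    [DecidableEq V₁] [DecidableEq V₂]
    (G₁ : SimpleGraph V₁) [DecidableRel G₁.Adj] (G₂ : SimpleGraph V₂) [DecidableRel G₂.Adj]
    (hconn₁ : G₁.Connected) (hconn₂ : G₂.Connected)
    (hcard₁ : 2 ≤ Fintype.card V₁) (hcard₂ : 2 ≤ Fintype.card V₂)
    (φ : V₂ → V₁) (μ : V₂ → ℕ)
    (hharm : IsHarmonicMorphism G₂ G₁ φ μ)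
    (hnc : ∃ v w : V₂, φ v ≠ φ w)
    (R₁ S₁ : V₁ → ℤ) (hA₁ : IsArithStructure G₁ R₁ S₁) :
    IsArithStructure G₂ (fun v => R₁ (φ v))
      (fun v => (μ v : ℤ) * S₁ (φ v) + (vertMult G₂ φ v : ℤ)) := by
  obtain ⟨hmor, hmu⟩ := hharm
  obtain ⟨hR₁, hS₁, hgcd₁, hL₁⟩ := hA₁
  -- Laplacian identity for Γ₁ pointwise
  have hL₁' : ∀ x, ∑ y ∈ G₁.neighborFinset x, R₁ y = S₁ x * R₁ x := by
    intro x
    have := congrFun hL₁ x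
    simp only [arithLaplacian, sub_mulVec, mulVec_diagonal,
      SimpleGraph.adjMatrix_mulVec_apply, Pi.zero_apply, Pi.sub_apply, sub_eq_zero] at this
    exact this.symm
  -- every vertex of Γ₂ has an incident vertical or horizontal edge
  have hpos₂ : ∀ v : V₂, 0 < (μ v : ℤ) * S₁ (φ v) + (vertMult G₂ φ v : ℤ) := by
    intro v
    obtain ⟨w, hw⟩ := exists_adj_of_connected hconn₂ hcard₂ v
    rcases hmor hw with heq | hadj
    · have h1 : 1 ≤ vertMult G₂ φ v := by
        apply Finset.card_pos.mpr
        exact ⟨w, by simp [hw, heq.symm]⟩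
      have : (0:ℤ) ≤ (μ v : ℤ) * S₁ (φ v) :=
        mul_nonneg (Int.ofNat_nonneg _) (hS₁ _).le
      omega
    · have h1 : 1 ≤ μ v := by
        rw [← hmu v (φ w) hadj]
        apply Finset.card_pos.mpr
        exact ⟨w, by simp [hw]⟩
      have : (1:ℤ) ≤ (μ v : ℤ) * S₁ (φ v) :=
        one_le_mul_of_one_le_of_one_le (by exact_mod_cast h1) (hS₁ _)
      omega
  -- surjectivity of φ
  have hstep : ∀ x y, (∃ v, φ v = x) → G₁.Adj x y → ∃ w, φ w = y := by
    intro x y ⟨u, hu⟩ hxy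
    obtain ⟨a, b, hab⟩ := hnc
    have : ∃ t, φ t ≠ x := by
      by_cases hax : φ a = x
      · exact ⟨b, by rw [hax] at hab; exact fun h => hab h.symm⟩
      · exact ⟨a, hax⟩
    obtain ⟨t, ht⟩ := this
    obtain ⟨p⟩ := hconn₂ u t
    obtain ⟨v, w, hvw, hv, hw⟩ := exists_crossing p x hu ht
    have hadj : G₁.Adj (φ v) (φ w) := by
      rcases hmor hvw with h | h
      · exact absurd (h ▸ hv) hw
      · exact h
    rw [hv] at hadj
    have hmu1 : 1 ≤ μ v := by
      rw [← hmu v (φ w) (hv ▸ hadj)]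
      apply Finset.card_pos.mpr
      exact ⟨w, by simp [hvw]⟩
    have hy : 1 ≤ locHorizMult G₂ φ v y := by
      rw [hmu v y (hv ▸ hxy)]; exact hmu1
    obtain ⟨w', hw'⟩ := Finset.card_pos.mp hy
    simp only [Finset.mem_filter] at hw'
    exact ⟨w', hw'.2.2⟩
  have hsurj : Function.Surjective φ := by
    intro y
    obtain ⟨v₀⟩ := hconn₂.nonempty
    obtain ⟨p⟩ := hconn₁ (φ v₀) y
    exact image_walk hstep p ⟨v₀, rfl⟩
  refine ⟨fun v => hR₁ _, hpos₂, ?_, ?_⟩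
  · -- gcd
    have : (Finset.univ.image φ).gcd R₁ = Finset.univ.gcd (R₁ ∘ φ) :=
      Finset.gcd_image _
    rw [Finset.image_univ_of_surjective hsurj] at this
    rw [show (fun v => R₁ (φ v)) = R₁ ∘ φ from rfl, ← this, hgcd₁]
  · -- Laplacian identity
    funext v
    simp only [arithLaplacian, sub_mulVec, mulVec_diagonal,
      SimpleGraph.adjMatrix_mulVec_apply, Pi.zero_apply, Pi.sub_apply, sub_eq_zero]
    -- goal: S₂ v * R₁ (φ v) = ∑ w ∈ nb v, R₁ (φ w)
    have hsplit :
        ∑ w ∈ (G₂.neighborFinset v).filter (fun w => φ w = φ v), R₁ (φ w)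
          + ∑ w ∈ (G₂.neighborFinset v).filter (fun w => ¬ φ w = φ v), R₁ (φ w)
        = ∑ w ∈ G₂.neighborFinset v, R₁ (φ w) :=
      Finset.sum_filter_add_sum_filter_not _ _ _
    have hvert : ∑ w ∈ (G₂.neighborFinset v).filter (fun w => φ w = φ v), R₁ (φ w)
        = (vertMult G₂ φ v : ℤ) * R₁ (φ v) := by
      have h1 : ∑ w ∈ (G₂.neighborFinset v).filter (fun w => φ w = φ v), R₁ (φ w)
          = ((G₂.neighborFinset v).filter (fun w => φ w = φ v)).card • R₁ (φ v) := by
        rw [← Finset.sum_const]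
        exact Finset.sum_congr rfl (fun w hw => by
          rw [Finset.mem_filter] at hw; rw [hw.2])
      rw [h1, nsmul_eq_mul]
      congr 2
      rw [vertMult]
      congr 1
      ext w
      simp [SimpleGraph.mem_neighborFinset, and_comm]
    have hmaps : ∀ w ∈ (G₂.neighborFinset v).filter (fun w => ¬ φ w = φ v),
        φ w ∈ G₁.neighborFinset (φ v) := by
      intro w hw
      rw [Finset.mem_filter, SimpleGraph.mem_neighborFinset] at hw
      rw [SimpleGraph.mem_neighborFinset]
      rcases hmor hw.1 with h | h
      · exact absurd h.symm hw.2
      · exact h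
    have hhoriz : ∑ w ∈ (G₂.neighborFinset v).filter (fun w => ¬ φ w = φ v), R₁ (φ w)
        = (μ v : ℤ) * (S₁ (φ v) * R₁ (φ v)) := by
      rw [← Finset.sum_fiberwise_of_maps_to hmaps (fun w => R₁ (φ w))]
      have : ∀ x ∈ G₁.neighborFinset (φ v),
          ∑ w ∈ ((G₂.neighborFinset v).filter (fun w => ¬ φ w = φ v)).filter
            (fun w => φ w = x), R₁ (φ w) = (μ v : ℤ) * R₁ x := by
        intro x hx
        rw [SimpleGraph.mem_neighborFinset] at hx
        have hxne : x ≠ φ v := hx.ne'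
        have hfe : ((G₂.neighborFinset v).filter (fun w => ¬ φ w = φ v)).filter
            (fun w => φ w = x)
            = Finset.univ.filter (fun w => G₂.Adj v w ∧ φ w = x) := by
          ext w
          simp only [Finset.mem_filter, SimpleGraph.mem_neighborFinset, Finset.mem_univ,
            true_and]
          constructor
          · rintro ⟨⟨h1, _⟩, h3⟩; exact ⟨h1, h3⟩
          · rintro ⟨h1, h3⟩; exact ⟨⟨h1, h3 ▸ hxne⟩, h3⟩
        have h1 : ∑ w ∈ ((G₂.neighborFinset v).filter (fun w => ¬ φ w = φ v)).filter
              (fun w => φ w = x), R₁ (φ w)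
            = (Finset.univ.filter (fun w => G₂.Adj v w ∧ φ w = x)).card • R₁ x := by
          rw [hfe, ← Finset.sum_const]
          exact Finset.sum_congr rfl (fun w hw => by
            rw [Finset.mem_filter] at hw; rw [hw.2.2])
        rw [h1, nsmul_eq_mul]
        congr 2
        exact hmu v x hx
      rw [Finset.sum_congr rfl this, ← Finset.mul_sum, hL₁' (φ v)]
    rw [← hsplit, hvert, hhoriz]
    ring
end

section
/- Let φ : Γ₂ → Γ₁ be a non-constant harmonic morphism, (R₁,S₁) an arithmetical structure on Γ₁, and (R₂,S₂) its pullback to Γ₂. For any divisor ξ on Γ₁, the pullback divisor φ*ξ = D_μΦξ satisfies deg₂(φ*ξ) = deg(φ)·deg₁(ξ). -/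
open Matrix Finset

theorem fiber_sum' {V₁ V₂ : Type*} [Fintype V₁] [Fintype V₂]
    [DecidableEq V₁] [DecidableEq V₂]
    (G₁ : SimpleGraph V₁) [DecidableRel G₁.Adj] (G₂ : SimpleGraph V₂) [DecidableRel G₂.Adj]
    (hconn₁ : G₁.Connected) (hcard₁ : 2 ≤ Fintype.card V₁)
    (φ : V₂ → V₁) (μ : V₂ → ℕ)
    (hharm : IsHarmonicMorphism G₂ G₁ φ μ)
    (d : ℕ) (hdeg : IsDegreeOf G₂ G₁ φ d) (x : V₁) :
    ∑ v ∈ Finset.univ.filter (fun v => φ v = x), μ v = d := by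
  obtain ⟨y, hxy⟩ : ∃ y, G₁.Adj x y := by
    obtain ⟨z, hz⟩ := Fintype.exists_ne_of_one_lt_card (by omega) x
    obtain ⟨p⟩ := hconn₁ x z
    cases p with
    | nil => exact absurd rfl hz.symm
    | cons h p => exact ⟨_, h⟩
  have hd := hdeg hxy
  rw [← hd]
  rw [Finset.card_filter, Fintype.sum_prod_type]
  rw [Finset.sum_filter]
  apply Finset.sum_congr rfl
  intro v _
  by_cases hv : φ v = x
  · simp only [hv, if_true]
    have := hharm.2 v y (hv ▸ hxy)
    rw [← this, locHorizMult, Finset.card_filter]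
    apply Finset.sum_congr rfl
    intro w _
    simp [hv]
  · simp only [hv, if_false]
    simp

/-- Lemma `degree-pullback`. The pullback divisor `φ*ξ = D_μΦξ`
satisfies `deg₂(φ*ξ) = deg(φ)·deg₁(ξ)`. -/
theorem pullback_degree {V₁ V₂ : Type*} [Fintype V₁] [Fintype V₂]
    [DecidableEq V₁] [DecidableEq V₂]
    (G₁ : SimpleGraph V₁) [DecidableRel G₁.Adj] (G₂ : SimpleGraph V₂) [DecidableRel G₂.Adj]
    (hconn₁ : G₁.Connected) (hconn₂ : G₂.Connected)
    (hcard₁ : 2 ≤ Fintype.card V₁) (hcard₂ : 2 ≤ Fintype.card V₂)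
    (φ : V₂ → V₁) (μ : V₂ → ℕ)
    (hharm : IsHarmonicMorphism G₂ G₁ φ μ)
    (hnc : ∃ v w : V₂, φ v ≠ φ w)
    (R₁ S₁ : V₁ → ℤ) (hA₁ : IsArithStructure G₁ R₁ S₁)
    (d : ℕ) (hdeg : IsDegreeOf G₂ G₁ φ d) (ξ : V₁ → ℤ) :
    (fun v => R₁ (φ v)) ⬝ᵥ
        ((Matrix.diagonal (fun v => (μ v : ℤ)) * vertexMapMatrix φ) *ᵥ ξ) =
      (d : ℤ) * (R₁ ⬝ᵥ ξ) := by
  classical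
  have hΦ : ∀ v, (vertexMapMatrix φ *ᵥ ξ) v = ξ (φ v) := by
    intro v
    simp [vertexMapMatrix, mulVec, dotProduct, ite_mul]
  have hLHS : (fun v => R₁ (φ v)) ⬝ᵥ
      ((Matrix.diagonal (fun v => (μ v : ℤ)) * vertexMapMatrix φ) *ᵥ ξ) =
      ∑ v : V₂, (μ v : ℤ) * (R₁ (φ v) * ξ (φ v)) := by
    rw [← Matrix.mulVec_mulVec]
    simp only [dotProduct, Matrix.mulVec_diagonal, hΦ]
    exact Finset.sum_congr rfl fun v _ => by ring
  rw [hLHS]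
  rw [← Finset.sum_fiberwise Finset.univ φ (fun v => (μ v : ℤ) * (R₁ (φ v) * ξ (φ v)))]
  rw [dotProduct, Finset.mul_sum]
  apply Finset.sum_congr rfl
  intro x _
  have key := fiber_sum' G₁ G₂ hconn₁ hcard₁ φ μ hharm d hdeg x
  calc ∑ v ∈ Finset.univ.filter (fun v => φ v = x), (μ v : ℤ) * (R₁ (φ v) * ξ (φ v))
      = ∑ v ∈ Finset.univ.filter (fun v => φ v = x), (μ v : ℤ) * (R₁ x * ξ x) := by
        apply Finset.sum_congr rfl; intro v hv
        rw [Finset.mem_filter] at hv; rw [hv.2]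
    _ = (∑ v ∈ Finset.univ.filter (fun v => φ v = x), (μ v : ℤ)) * (R₁ x * ξ x) := by
        rw [Finset.sum_mul]
    _ = (d : ℤ) * (R₁ x * ξ x) := by rw [← key]; push_cast; ring
end

section
/- Let φ : Γ₂ → Γ₁ be a non-constant harmonic morphism with pullback arithmetical structures as above. If ξ is a principal divisor on Γ₁ (i.e., ξ = L₁g for an integer vector g), then the pullback divisor φ*ξ = D_μΦξ is principal on Γ₂; explicitly, φ*ξ = L₂(Φg). -/
open Matrix Finset

section Aux

variable {V₁ V₂ : Type*} [Fintype V₁] [Fintype V₂] [DecidableEq V₁] [DecidableEq V₂]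
  (G₁ : SimpleGraph V₁) [DecidableRel G₁.Adj] (G₂ : SimpleGraph V₂) [DecidableRel G₂.Adj]

theorem key_sum (φ : V₂ → V₁) (μ : V₂ → ℕ) (hharm : IsHarmonicMorphism G₂ G₁ φ μ)
    (g : V₁ → ℤ) (v : V₂) :
    ∑ w ∈ G₂.neighborFinset v, g (φ w) =
      (μ v : ℤ) * ∑ x ∈ G₁.neighborFinset (φ v), g x + (vertMult G₂ φ v : ℤ) * g (φ v) := by
  have hfib : ∀ x : V₁, (G₂.neighborFinset v).filter (fun w => φ w = x)
      = Finset.univ.filter fun w => G₂.Adj v w ∧ φ w = x := by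
    intro x
    ext w
    simp [SimpleGraph.mem_neighborFinset, and_assoc]
  have h1 : ∑ w ∈ G₂.neighborFinset v, g (φ w)
      = ∑ x : V₁, ((locHorizMult G₂ φ v x : ℤ) * g x) := by
    rw [← Finset.sum_fiberwise (G₂.neighborFinset v) φ (fun w => g (φ w))]
    refine Finset.sum_congr rfl fun x _ => ?_
    have hterm : ∀ w ∈ (G₂.neighborFinset v).filter (fun w => φ w = x), g (φ w) = g x := by
      intro w hw
      rw [(Finset.mem_filter.mp hw).2]
    rw [Finset.sum_congr rfl hterm, Finset.sum_const, locHorizMult, ← hfib]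
    simp [mul_comm]
  rw [h1]
  have hsub : insert (φ v) (G₁.neighborFinset (φ v)) ⊆ Finset.univ := Finset.subset_univ _
  rw [← Finset.sum_subset hsub]
  · rw [Finset.sum_insert (by simp)]
    have hvert : locHorizMult G₂ φ v (φ v) = vertMult G₂ φ v := rfl
    rw [hvert, add_comm]
    congr 1
    rw [Finset.mul_sum]
    refine Finset.sum_congr rfl fun x hx => ?_
    rw [SimpleGraph.mem_neighborFinset] at hx
    rw [hharm.2 v x hx]
  · intro x _ hx
    simp only [Finset.mem_insert, SimpleGraph.mem_neighborFinset, not_or] at hx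
    have : locHorizMult G₂ φ v x = 0 := by
      rw [locHorizMult, Finset.card_eq_zero, Finset.filter_eq_empty_iff]
      rintro w - ⟨hadj, hw⟩
      rcases hharm.1 hadj with h | h
      · exact hx.1 (hw ▸ h.symm)
      · exact hx.2 (hw ▸ h)
    simp [this]

end Aux

/-- The pullback of a principal divisor is principal:
`φ*(L₁g) = L₂(Φg)`. -/
theorem pullback_principal {V₁ V₂ : Type*} [Fintype V₁] [Fintype V₂]
    [DecidableEq V₁] [DecidableEq V₂]
    (G₁ : SimpleGraph V₁) [DecidableRel G₁.Adj] (G₂ : SimpleGraph V₂) [DecidableRel G₂.Adj]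
    (hconn₁ : G₁.Connected) (hconn₂ : G₂.Connected)
    (hcard₁ : 2 ≤ Fintype.card V₁) (hcard₂ : 2 ≤ Fintype.card V₂)
    (φ : V₂ → V₁) (μ : V₂ → ℕ)
    (hharm : IsHarmonicMorphism G₂ G₁ φ μ)
    (hnc : ∃ v w : V₂, φ v ≠ φ w)
    (R₁ S₁ : V₁ → ℤ) (hA₁ : IsArithStructure G₁ R₁ S₁)
    (g : V₁ → ℤ) :
    (Matrix.diagonal (fun v => (μ v : ℤ)) * vertexMapMatrix φ) *ᵥ
        (arithLaplacian G₁ S₁ *ᵥ g) =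
      arithLaplacian G₂ (fun v => (μ v : ℤ) * S₁ (φ v) + (vertMult G₂ φ v : ℤ)) *ᵥ
        (vertexMapMatrix φ *ᵥ g) := by
  funext v
  have hΦ : ∀ h : V₁ → ℤ, (vertexMapMatrix φ *ᵥ h) v = h (φ v) := by
    intro h
    simp [vertexMapMatrix, Matrix.mulVec, dotProduct]
  rw [← Matrix.mulVec_mulVec, Matrix.mulVec_diagonal, hΦ]
  simp only [arithLaplacian, Matrix.sub_mulVec, Pi.sub_apply, Matrix.mulVec_diagonal,
    SimpleGraph.adjMatrix_mulVec_apply]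
  have hΦg : ∀ w, (vertexMapMatrix φ *ᵥ g) w = g (φ w) := by
    intro w
    simp [vertexMapMatrix, Matrix.mulVec, dotProduct]
  rw [hΦ, Finset.sum_congr rfl (fun w _ => hΦg w), key_sum G₁ G₂ φ μ hharm g v]
  ring
end

section
/- Let φ : Γ₂ → Γ₁ be a non-constant harmonic morphism with pullback arithmetical structures. If δ is a principal divisor on Γ₂, i.e., δ = L₂f for an integer vector f, then Φᵗδ is principal on Γ₁; explicitly, Φᵗδ = L₁(ΦᵗD_μf). -/
open Matrix Finset

lemma aux_sum {α : Type*} [Fintype α] [DecidableEq α] (v : α) (p : α → Prop)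
    [DecidablePred p] (a : ℤ) :
    (∑ x, if p x then (if v = x then a else 0) else 0) = if p v then a else 0 := by
  rw [Finset.sum_eq_single v]
  · simp
  · intro b _ hb
    simp [(Ne.symm hb : v ≠ b)]
  · simp

lemma key {V₁ V₂ : Type*} [Fintype V₁] [Fintype V₂]
    [DecidableEq V₁] [DecidableEq V₂]
    (G₁ : SimpleGraph V₁) [DecidableRel G₁.Adj] (G₂ : SimpleGraph V₂) [DecidableRel G₂.Adj]
    (φ : V₂ → V₁) (μ : V₂ → ℕ)
    (hharm : IsHarmonicMorphism G₂ G₁ φ μ) (S₁ : V₁ → ℤ) :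
    arithLaplacian G₂ (fun v => (μ v : ℤ) * S₁ (φ v) + (vertMult G₂ φ v : ℤ)) *
      vertexMapMatrix φ =
    Matrix.diagonal (fun v => (μ v : ℤ)) * vertexMapMatrix φ * arithLaplacian G₁ S₁ := by
  ext v x
  have hsum : ∑ w, (G₂.adjMatrix ℤ v w) * (if φ w = x then 1 else 0)
      = (locHorizMult G₂ φ v x : ℤ) := by
    rw [locHorizMult]
    push_cast
    rw [Finset.card_filter]
    push_cast
    refine Finset.sum_congr rfl fun w _ => ?_
    by_cases h1 : G₂.Adj v w <;> by_cases h2 : φ w = x <;> simp [h1, h2]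
  simp only [arithLaplacian, Matrix.mul_apply, Matrix.sub_apply, Matrix.diagonal_apply,
    vertexMapMatrix, Matrix.of_apply, sub_mul, Finset.sum_sub_distrib, mul_sub]
  rw [hsum]
  simp only [ite_mul, zero_mul, one_mul, mul_one, mul_ite, mul_zero]
  simp only [aux_sum]
  by_cases h : φ v = x
  · subst h
    have hloc : locHorizMult G₂ φ v (φ v) = vertMult G₂ φ v := rfl
    simp [hloc, SimpleGraph.adjMatrix_apply, G₁.irrefl, aux_sum]
  · simp only [h, if_false, zero_sub, sub_zero, zero_mul, aux_sum]
    by_cases hadj : G₁.Adj (φ v) x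
    · rw [hharm.2 v x hadj]
      simp [Finset.sum_ite_eq', Finset.sum_ite_eq, ite_mul, zero_mul, h,
        SimpleGraph.adjMatrix_apply, hadj]
      rw [aux_sum (φ v) (fun y => G₁.Adj y x)]
      simp [hadj]
    · have hloc : locHorizMult G₂ φ v x = 0 := by
        rw [locHorizMult, Finset.card_eq_zero, Finset.filter_eq_empty_iff]
        rintro w - ⟨haw, hwx⟩
        rcases hharm.1 haw with h1 | h1
        · exact h (h1.trans hwx)
        · exact hadj (hwx ▸ h1)
      simp [Finset.sum_ite_eq', Finset.sum_ite_eq, ite_mul, zero_mul, h, hloc,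
        SimpleGraph.adjMatrix_apply, hadj]
      rw [aux_sum (φ v) (fun y => G₁.Adj y x)]
      simp [hadj]


lemma lap_symm {V : Type*} [Fintype V] [DecidableEq V] (G : SimpleGraph V)
    [DecidableRel G.Adj] (S : V → ℤ) : (arithLaplacian G S)ᵀ = arithLaplacian G S := by
  simp [arithLaplacian, Matrix.transpose_sub]

/-- The pushforward of a principal divisor is principal:
`Φᵗ(L₂f) = L₁(ΦᵗD_μf)`. -/
theorem pushforward_principal {V₁ V₂ : Type*} [Fintype V₁] [Fintype V₂]
    [DecidableEq V₁] [DecidableEq V₂]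
    (G₁ : SimpleGraph V₁) [DecidableRel G₁.Adj] (G₂ : SimpleGraph V₂) [DecidableRel G₂.Adj]
    (hconn₁ : G₁.Connected) (hconn₂ : G₂.Connected)
    (hcard₁ : 2 ≤ Fintype.card V₁) (hcard₂ : 2 ≤ Fintype.card V₂)
    (φ : V₂ → V₁) (μ : V₂ → ℕ)
    (hharm : IsHarmonicMorphism G₂ G₁ φ μ)
    (hnc : ∃ v w : V₂, φ v ≠ φ w)
    (R₁ S₁ : V₁ → ℤ) (hA₁ : IsArithStructure G₁ R₁ S₁)
    (f : V₂ → ℤ) :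
    (vertexMapMatrix φ)ᵀ *ᵥ
        (arithLaplacian G₂ (fun v => (μ v : ℤ) * S₁ (φ v) + (vertMult G₂ φ v : ℤ)) *ᵥ f) =
      arithLaplacian G₁ S₁ *ᵥ
        ((vertexMapMatrix φ)ᵀ *ᵥ (Matrix.diagonal (fun v => (μ v : ℤ)) *ᵥ f)) := by
  rw [Matrix.mulVec_mulVec, Matrix.mulVec_mulVec, Matrix.mulVec_mulVec]
  have hk := congrArg Matrix.transpose (key G₁ G₂ φ μ hharm S₁)
  simp only [Matrix.transpose_mul, lap_symm, Matrix.diagonal_transpose,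
    Matrix.mul_assoc] at hk
  rw [hk, Matrix.mul_assoc]
end

section
/- Let φ : Γ₂ → Γ₁ be a non-constant harmonic morphism of connected graphs with pullback arithmetical structures. The pushforward φ_* induces a surjective group homomorphism from the arithmetical critical group K(Γ₂; R₂, S₂) = Div⁰(Γ₂)/Prin(Γ₂) onto K(Γ₁; R₁, S₁) = Div⁰(Γ₁)/Prin(Γ₁). -/
open Matrix Finset

section Crit

variable {V : Type*}

/-- Degree-zero divisors with respect to `R`. -/
def Div0 [Fintype V] (R : V → ℤ) : AddSubgroup (V → ℤ) where
  carrier := {δ | R ⬝ᵥ δ = 0}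
  add_mem' := by
    intro a b ha hb
    simp only [Set.mem_setOf_eq] at *
    rw [dotProduct_add, ha, hb, add_zero]
  zero_mem' := by
    simp only [Set.mem_setOf_eq, dotProduct_zero]
  neg_mem' := by
    intro a ha
    simp only [Set.mem_setOf_eq] at *
    rw [dotProduct_neg, ha, neg_zero]

/-- Principal divisors: the image of the arithmetical Laplacian. -/
def PrinSubgroup [Fintype V] [DecidableEq V] (G : SimpleGraph V) [DecidableRel G.Adj]
    (S : V → ℤ) : AddSubgroup (V → ℤ) :=
  Submodule.toAddSubgroup (LinearMap.range (Matrix.mulVecLin (arithLaplacian G S)))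

/-- The arithmetical critical group `Div⁰/Prin`. -/
abbrev CriticalGroup [Fintype V] [DecidableEq V] (G : SimpleGraph V) [DecidableRel G.Adj]
    (R S : V → ℤ) : Type _ :=
  Div0 R ⧸ (PrinSubgroup G S).addSubgroupOf (Div0 R)

end Crit

section Aux
set_option linter.unusedSectionVars false

variable {V₁ V₂ : Type*} [Fintype V₁] [Fintype V₂] [DecidableEq V₁] [DecidableEq V₂]
  {G₁ : SimpleGraph V₁} [DecidableRel G₁.Adj] {G₂ : SimpleGraph V₂} [DecidableRel G₂.Adj]
  {φ : V₂ → V₁} {μ : V₂ → ℕ}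

lemma key_matrix (hharm : IsHarmonicMorphism G₂ G₁ φ μ) (S₁ : V₁ → ℤ) :
    (vertexMapMatrix φ)ᵀ *
        arithLaplacian G₂ (fun v => (μ v : ℤ) * S₁ (φ v) + (vertMult G₂ φ v : ℤ))
      = arithLaplacian G₁ S₁ *
          ((vertexMapMatrix φ)ᵀ * Matrix.diagonal (fun v => (μ v : ℤ))) := by
  ext x w
  rw [Matrix.mul_apply, Matrix.mul_apply]
  have hR : ∀ y, ((vertexMapMatrix φ)ᵀ * Matrix.diagonal (fun v => (μ v : ℤ))) y w
      = if φ w = y then (μ w : ℤ) else 0 := by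
    intro y
    rw [Matrix.mul_diagonal]
    simp [vertexMapMatrix, Matrix.transpose_apply, ite_mul]
  simp only [hR]
  have hRHS : ∑ y, arithLaplacian G₁ S₁ x y * (if φ w = y then (μ w : ℤ) else 0)
      = arithLaplacian G₁ S₁ x (φ w) * μ w := by
    rw [Finset.sum_eq_single (φ w)]
    · simp
    · intro y _ hy; simp [Ne.symm hy]
    · simp
  rw [hRHS]
  have hLHS : ∀ v, (vertexMapMatrix φ)ᵀ x v *
      arithLaplacian G₂ (fun v => (μ v : ℤ) * S₁ (φ v) + (vertMult G₂ φ v : ℤ)) v w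
      = (if v = w ∧ φ w = x then ((μ w : ℤ) * S₁ (φ w) + (vertMult G₂ φ w : ℤ)) else 0)
        - (if G₂.Adj w v ∧ φ v = x then 1 else 0) := by
    intro v
    simp only [vertexMapMatrix, Matrix.transpose_apply, Matrix.of_apply, arithLaplacian,
      Matrix.sub_apply, Matrix.diagonal_apply, SimpleGraph.adjMatrix_apply]
    by_cases h2 : v = w
    · subst h2; by_cases h1 : φ v = x <;> simp [h1, SimpleGraph.irrefl]
    · by_cases h1 : φ v = x <;> simp [h1, h2, G₂.adj_comm]
  simp only [hLHS]
  rw [Finset.sum_sub_distrib]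
  have e1 : ∑ v, (if v = w ∧ φ w = x then ((μ w : ℤ) * S₁ (φ w) + (vertMult G₂ φ w : ℤ)) else 0)
      = if φ w = x then ((μ w : ℤ) * S₁ (φ w) + (vertMult G₂ φ w : ℤ)) else 0 := by
    rw [Finset.sum_eq_single w]
    · simp
    · intro v _ hv; simp [hv]
    · simp
  have e2 : ∑ v, (if G₂.Adj w v ∧ φ v = x then (1:ℤ) else 0)
      = (locHorizMult G₂ φ w x : ℤ) := by
    rw [locHorizMult, Finset.sum_boole]
  rw [e1, e2]
  by_cases h : φ w = x
  · have hv : locHorizMult G₂ φ w x = vertMult G₂ φ w := by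
      rw [locHorizMult, vertMult, h]
    rw [hv]
    subst h
    simp [arithLaplacian, Matrix.diagonal_apply, SimpleGraph.irrefl]
    ring
  · by_cases hadj : G₁.Adj x (φ w)
    · have : locHorizMult G₂ φ w x = μ w := hharm.2 w x hadj.symm
      rw [this]
      simp [arithLaplacian, Matrix.diagonal_apply, h, Ne.symm h, hadj]
    · have : locHorizMult G₂ φ w x = 0 := by
        rw [locHorizMult, Finset.card_eq_zero, Finset.filter_eq_empty_iff]
        rintro u - ⟨hu1, hu2⟩
        rcases hharm.1 hu1 with he | he
        · exact h (he.trans hu2)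
        · rw [hu2] at he; exact hadj he.symm
      rw [this]
      simp [arithLaplacian, Matrix.diagonal_apply, h, Ne.symm h, hadj]

lemma phi_eq_of_walk (hall : ∀ ⦃v w⦄, G₂.Adj v w → φ v = φ w) {v w : V₂}
    (p : G₂.Walk v w) : φ v = φ w := by
  induction p with
  | nil => rfl
  | cons h _ ih => exact (hall h).trans ih

lemma exists_horiz (hconn₂ : G₂.Connected) (hnc : ∃ v w : V₂, φ v ≠ φ w) :
    ∃ v w, G₂.Adj v w ∧ φ v ≠ φ w := by
  by_contra hc
  push_neg at hc
  obtain ⟨v, w, hvw⟩ := hnc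
  obtain ⟨p⟩ := hconn₂.preconnected v w
  exact hvw (phi_eq_of_walk hc p)

lemma dsum_adj (hharm : IsHarmonicMorphism G₂ G₁ φ μ) {x y : V₁} (hxy : G₁.Adj x y) :
    ∑ v, (if φ v = x then μ v else 0) = ∑ v, (if φ v = y then μ v else 0) := by
  have expand : ∀ (x y : V₁), G₁.Adj x y →
      ∑ v, (if φ v = x then μ v else 0)
        = ∑ v, ∑ w, (if φ v = x ∧ G₂.Adj v w ∧ φ w = y then 1 else 0) := by
    intro x y hxy
    refine Finset.sum_congr rfl fun v _ => ?_
    by_cases h : φ v = x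
    · simp only [h, if_true]
      have hm : μ v = locHorizMult G₂ φ v y := (hharm.2 v y (h ▸ hxy)).symm
      rw [hm, locHorizMult, Finset.card_filter]
      refine Finset.sum_congr rfl fun w _ => ?_
      simp [h]
    · simp [h]
  rw [expand x y hxy, expand y x hxy.symm, Finset.sum_comm]
  refine Finset.sum_congr rfl fun w _ => Finset.sum_congr rfl fun v _ =>
    if_congr ?_ rfl rfl
  constructor
  · rintro ⟨h1, h2, h3⟩; exact ⟨h3, h2.symm, h1⟩
  · rintro ⟨h1, h2, h3⟩; exact ⟨h3, h2.symm, h1⟩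

lemma dsum_walk (hharm : IsHarmonicMorphism G₂ G₁ φ μ) {x y : V₁} (p : G₁.Walk x y) :
    ∑ v, (if φ v = x then μ v else 0) = ∑ v, (if φ v = y then μ v else 0) := by
  induction p with
  | nil => rfl
  | cons h _ ih => exact (dsum_adj hharm h).trans ih

lemma phi_surj (hconn₁ : G₁.Connected) (hconn₂ : G₂.Connected)
    (hharm : IsHarmonicMorphism G₂ G₁ φ μ) (hnc : ∃ v w : V₂, φ v ≠ φ w) :
    Function.Surjective φ := by
  obtain ⟨v₀, w₀, hadj, hne⟩ := exists_horiz hconn₂ hnc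
  have hadj1 : G₁.Adj (φ v₀) (φ w₀) := (hharm.1 hadj).resolve_left hne
  have hmu : 0 < μ v₀ := by
    have h := hharm.2 v₀ (φ w₀) hadj1
    rw [← h, locHorizMult, Finset.card_pos]
    exact ⟨w₀, by simp [hadj]⟩
  have hpos : 0 < ∑ v, (if φ v = φ v₀ then μ v else 0) := by
    refine lt_of_lt_of_le hmu ?_
    have h := Finset.single_le_sum (f := fun v => if φ v = φ v₀ then μ v else 0)
      (fun i _ => Nat.zero_le _) (Finset.mem_univ v₀)
    simpa using h
  intro y
  obtain ⟨p⟩ := hconn₁.preconnected (φ v₀) y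
  have hy : 0 < ∑ v, (if φ v = y then μ v else 0) := by
    rw [← dsum_walk hharm p]; exact hpos
  obtain ⟨v, -, hv⟩ := Finset.exists_ne_zero_of_sum_ne_zero
    (f := fun v => if φ v = y then μ v else 0) hy.ne'
  by_cases h : φ v = y
  · exact ⟨v, h⟩
  · simp [h] at hv

end Aux

/-- Theorem `surjective-on-critical-groups`. The pushforward
`φ_*δ = Φᵗδ` induces a surjective group homomorphism
`K(Γ₂;R₂,S₂) → K(Γ₁;R₁,S₁)`. -/
theorem pushforward_critical_group_surjective {V₁ V₂ : Type*} [Fintype V₁] [Fintype V₂]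
    [DecidableEq V₁] [DecidableEq V₂]
    (G₁ : SimpleGraph V₁) [DecidableRel G₁.Adj] (G₂ : SimpleGraph V₂) [DecidableRel G₂.Adj]
    (hconn₁ : G₁.Connected) (hconn₂ : G₂.Connected)
    (hcard₁ : 2 ≤ Fintype.card V₁) (hcard₂ : 2 ≤ Fintype.card V₂)
    (φ : V₂ → V₁) (μ : V₂ → ℕ)
    (hharm : IsHarmonicMorphism G₂ G₁ φ μ)
    (hnc : ∃ v w : V₂, φ v ≠ φ w)
    (R₁ S₁ : V₁ → ℤ) (hA₁ : IsArithStructure G₁ R₁ S₁) :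
    ∃ ψ : CriticalGroup G₂ (fun v => R₁ (φ v))
            (fun v => (μ v : ℤ) * S₁ (φ v) + (vertMult G₂ φ v : ℤ)) →+
          CriticalGroup G₁ R₁ S₁,
      Function.Surjective ψ ∧
        ∀ (δ₂ : Div0 (fun v => R₁ (φ v))) (δ₁ : Div0 R₁),
          (vertexMapMatrix φ)ᵀ *ᵥ (δ₂ : V₂ → ℤ) = (δ₁ : V₁ → ℤ) →
            ψ (QuotientAddGroup.mk δ₂) = QuotientAddGroup.mk δ₁ := by
  classical
  have hdeg : ∀ δ : V₂ → ℤ,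
      (fun v => R₁ (φ v)) ⬝ᵥ δ = R₁ ⬝ᵥ ((vertexMapMatrix φ)ᵀ *ᵥ δ) := by
    intro δ
    rw [Matrix.dotProduct_mulVec]
    congr 1
    funext v
    simp [Matrix.vecMul, dotProduct, vertexMapMatrix, Matrix.transpose_apply,
      mul_ite, mul_one, mul_zero, Finset.sum_ite_eq]
  have hmem : ∀ δ : Div0 (fun v => R₁ (φ v)),
      (vertexMapMatrix φ)ᵀ *ᵥ (δ : V₂ → ℤ) ∈ Div0 R₁ := by
    intro δ
    have h0 : (fun v => R₁ (φ v)) ⬝ᵥ (δ : V₂ → ℤ) = 0 := δ.2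
    show R₁ ⬝ᵥ _ = 0
    rw [← hdeg]
    exact h0
  let F : Div0 (fun v => R₁ (φ v)) →+ Div0 R₁ :=
    { toFun := fun δ => ⟨(vertexMapMatrix φ)ᵀ *ᵥ (δ : V₂ → ℤ), hmem δ⟩
      map_zero' := by
        apply Subtype.ext
        simp [Matrix.mulVec_zero]
      map_add' := by
        intro a b
        apply Subtype.ext
        simp [Matrix.mulVec_add] }
  have hkey := key_matrix (G₁ := G₁) (G₂ := G₂) hharm S₁
  have hle : (PrinSubgroup G₂
        (fun v => (μ v : ℤ) * S₁ (φ v) + (vertMult G₂ φ v : ℤ))).addSubgroupOf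
          (Div0 (fun v => R₁ (φ v))) ≤
      ((PrinSubgroup G₁ S₁).addSubgroupOf (Div0 R₁)).comap F := by
    intro δ hδ
    rw [AddSubgroup.mem_addSubgroupOf] at hδ
    rw [AddSubgroup.mem_comap, AddSubgroup.mem_addSubgroupOf]
    obtain ⟨f, hf⟩ := hδ
    refine ⟨((vertexMapMatrix φ)ᵀ * Matrix.diagonal fun v => (μ v : ℤ)) *ᵥ f, ?_⟩
    show arithLaplacian G₁ S₁ *ᵥ _ = (vertexMapMatrix φ)ᵀ *ᵥ (δ : V₂ → ℤ)
    have hf' : arithLaplacian G₂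
        (fun v => (μ v : ℤ) * S₁ (φ v) + (vertMult G₂ φ v : ℤ)) *ᵥ f = (δ : V₂ → ℤ) := hf
    rw [← hf', Matrix.mulVec_mulVec, Matrix.mulVec_mulVec, ← hkey]
  refine ⟨QuotientAddGroup.map _ _ F hle, ?_, ?_⟩
  · -- surjectivity
    have hsurj : Function.Surjective φ := phi_surj hconn₁ hconn₂ hharm hnc
    intro q
    obtain ⟨δ₁, rfl⟩ := QuotientAddGroup.mk_surjective q
    set s : V₁ → V₂ := Function.surjInv hsurj with hs_def
    have hs : ∀ x, φ (s x) = x := fun x => Function.surjInv_eq hsurj x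
    set d : V₂ → ℤ := fun v => if v = s (φ v) then (δ₁ : V₁ → ℤ) (φ v) else 0 with hd_def
    have hpush : (vertexMapMatrix φ)ᵀ *ᵥ d = (δ₁ : V₁ → ℤ) := by
      funext x
      show ∑ v, (vertexMapMatrix φ)ᵀ x v * d v = _
      rw [Finset.sum_eq_single (s x)]
      · simp [vertexMapMatrix, Matrix.transpose_apply, hd_def, hs]
      · intro v _ hv
        by_cases h1 : φ v = x
        · have h2 : v ≠ s (φ v) := by rw [h1]; exact hv
          simp [hd_def, h2]
        · simp [vertexMapMatrix, Matrix.transpose_apply, h1]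
      · simp
    have hd0 : d ∈ Div0 (fun v => R₁ (φ v)) := by
      show (fun v => R₁ (φ v)) ⬝ᵥ d = 0
      rw [hdeg, hpush]
      exact δ₁.2
    refine ⟨QuotientAddGroup.mk ⟨d, hd0⟩, ?_⟩
    rw [QuotientAddGroup.map_mk]
    congr 1
    exact Subtype.ext hpush
  · intro δ₂ δ₁ h
    have hF : F δ₂ = δ₁ := Subtype.ext h
    rw [QuotientAddGroup.map_mk, hF]
end

section
/- Let φ : Γ₂ → Γ₁ be a non-constant harmonic morphism of connected graphs, (R₁,S₁) an arithmetical structure on Γ₁, and (R₂,S₂) the pullback structure. Then the order of the arithmetical critical group K(Γ₁; R₁, S₁) divides the order of K(Γ₂; R₂, S₂). -/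
open Matrix Finset

section Walks

/-- Values of a function constant on edges are constant on connected components. -/
lemma aux_prop_of_reachable {α : Type*} {G : SimpleGraph α} {P : α → Prop}
    (hadj : ∀ ⦃x y⦄, G.Adj x y → P x → P y) {x y : α} (hxy : G.Reachable x y) (hx : P x) :
    P y := by
  obtain ⟨p⟩ := hxy
  induction p with
  | nil => exact hx
  | cons h' p ih => exact ih (hadj h' hx)

lemma aux_const_of_preconnected {α M : Type*} {G : SimpleGraph α} (h : G.Preconnected)
    {f : α → M} (hadj : ∀ ⦃x y⦄, G.Adj x y → f x = f y) (x y : α) : f x = f y :=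
  aux_prop_of_reachable (P := fun z => f x = f z) (fun _ _ ha hx => hx.trans (hadj ha)) (h x y) rfl

end Walks

section Lap

variable {V : Type*} [Fintype V] [DecidableEq V] (G : SimpleGraph V) [DecidableRel G.Adj]
  {α : Type*} [CommRing α]

lemma aux_lap_mulVec_apply (S : V → ℤ) (f : V → α) (v : V) :
    ((arithLaplacian G S).map (Int.cast : ℤ → α) *ᵥ f) v
      = (S v : α) * f v - ∑ w ∈ G.neighborFinset v, f w := by
  have hd : (Matrix.diagonal S).map (Int.cast : ℤ → α)
      = Matrix.diagonal (fun v => (S v : α)) := Matrix.diagonal_map (by simp)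
  have ha : (G.adjMatrix ℤ).map (Int.cast : ℤ → α) = G.adjMatrix α := by
    ext i j; by_cases h : G.Adj i j <;> simp [h]
  rw [arithLaplacian, Matrix.map_sub _ Int.cast_sub, hd, ha, Matrix.sub_mulVec]
  simp [Matrix.mulVec_diagonal, SimpleGraph.adjMatrix_mulVec_apply]

lemma aux_lap_mulVec_apply_int (S : V → ℤ) (f : V → ℤ) (v : V) :
    ((arithLaplacian G S) *ᵥ f) v
      = S v * f v - ∑ w ∈ G.neighborFinset v, f w := by
  have := aux_lap_mulVec_apply (α := ℤ) G S f v
  have hm : (arithLaplacian G S).map (Int.cast : ℤ → ℤ) = arithLaplacian G S := by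
    ext i j; simp [Matrix.map_apply]
  rw [hm] at this
  simpa using this

lemma aux_cast_mulVec (L : Matrix V V ℤ) (f : V → ℤ) :
    (L.map (Int.cast : ℤ → α)) *ᵥ (fun v => (f v : α)) = fun x => ((L *ᵥ f) x : α) := by
  ext x
  simp [Matrix.mulVec, dotProduct, Matrix.map_apply]

end Lap

section Harm

variable {V₁ V₂ : Type*} [Fintype V₂] [DecidableEq V₁]
  (G₂ : SimpleGraph V₂) [DecidableRel G₂.Adj] (G₁ : SimpleGraph V₁) [DecidableRel G₁.Adj]
  (φ : V₂ → V₁) (μ : V₂ → ℕ)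

lemma aux_locHoriz_self (v : V₂) : locHorizMult G₂ φ v (φ v) = vertMult G₂ φ v := rfl

lemma aux_locHoriz_eq (hharm : IsHarmonicMorphism G₂ G₁ φ μ) (v : V₂) (x : V₁) :
    locHorizMult G₂ φ v x
      = (if x = φ v then vertMult G₂ φ v else 0) + μ v * (if G₁.Adj (φ v) x then 1 else 0) := by
  by_cases h1 : x = φ v
  · subst h1
    simp [aux_locHoriz_self, SimpleGraph.irrefl]
  · by_cases h2 : G₁.Adj (φ v) x
    · simp [h1, h2, hharm.2 v x h2]
    · simp only [h1, h2, if_false, mul_zero, add_zero]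
      rw [locHorizMult, Finset.card_eq_zero, Finset.filter_eq_empty_iff]
      rintro w - ⟨hadj, rfl⟩
      rcases hharm.1 hadj with h | h
      · exact h1 h.symm
      · exact h2 h

variable [Fintype V₁] {α : Type*} [CommRing α]

lemma aux_neighbor_sum (hharm : IsHarmonicMorphism G₂ G₁ φ μ) (v : V₂) (f : V₁ → α) :
    ∑ w ∈ G₂.neighborFinset v, f (φ w)
      = (vertMult G₂ φ v : α) * f (φ v)
        + (μ v : α) * ∑ y ∈ G₁.neighborFinset (φ v), f y := by
  classical
  have h1 : ∑ w ∈ G₂.neighborFinset v, f (φ w)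
      = ∑ x : V₁, (locHorizMult G₂ φ v x : α) * f x := by
    rw [← Finset.sum_fiberwise (G₂.neighborFinset v) φ (fun w => f (φ w))]
    refine Finset.sum_congr rfl fun x _ => ?_
    have hfe : (G₂.neighborFinset v).filter (fun w => φ w = x)
        = Finset.univ.filter (fun w => G₂.Adj v w ∧ φ w = x) := by
      ext w; simp [SimpleGraph.mem_neighborFinset, and_comm]
    have : ∀ w ∈ (G₂.neighborFinset v).filter (fun w => φ w = x), f (φ w) = f x := by
      intro w hw; rw [Finset.mem_filter] at hw; rw [hw.2]
    rw [Finset.sum_congr rfl this, Finset.sum_const, hfe]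
    simp [locHorizMult, nsmul_eq_mul]
  rw [h1]
  have h2 : ∀ x : V₁, (locHorizMult G₂ φ v x : α) * f x
      = (if x = φ v then (vertMult G₂ φ v : α) * f x else 0)
        + (μ v : α) * (if G₁.Adj (φ v) x then f x else 0) := by
    intro x
    rw [aux_locHoriz_eq G₂ G₁ φ μ hharm v x]
    push_cast
    by_cases h1' : x = φ v <;> by_cases h2' : G₁.Adj (φ v) x <;>
      simp [h1', h2'] <;> ring
  rw [Finset.sum_congr rfl fun x _ => h2 x, Finset.sum_add_distrib,
    Finset.sum_ite_eq' Finset.univ (φ v), ← Finset.mul_sum]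
  congr 1
  · simp
  · congr 1
    rw [← Finset.sum_filter]
    congr 1
    ext y; simp [SimpleGraph.mem_neighborFinset]

/-- The fundamental pullback identity `L₂ (f ∘ φ) = μ · (L₁ f) ∘ φ`. -/
lemma aux_lap_pullback [DecidableEq V₂]
    (hharm : IsHarmonicMorphism G₂ G₁ φ μ) (S₁ : V₁ → ℤ) (f : V₁ → α) :
    ((arithLaplacian G₂ (fun v => (μ v : ℤ) * S₁ (φ v) + (vertMult G₂ φ v : ℤ))).map
        (Int.cast : ℤ → α)) *ᵥ (fun v => f (φ v))
      = fun v => (μ v : α) * (((arithLaplacian G₁ S₁).map (Int.cast : ℤ → α)) *ᵥ f) (φ v) := by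
  ext v
  rw [aux_lap_mulVec_apply, aux_lap_mulVec_apply,
    aux_neighbor_sum G₂ G₁ φ μ hharm v f]
  push_cast
  ring

end Harm

section Degree

variable {V₁ V₂ : Type*} [Fintype V₂] [Fintype V₁] [DecidableEq V₁] [DecidableEq V₂]
  (G₂ : SimpleGraph V₂) [DecidableRel G₂.Adj] (G₁ : SimpleGraph V₁) [DecidableRel G₁.Adj]
  (φ : V₂ → V₁) (μ : V₂ → ℕ)

lemma aux_fiber_sum_eq_card (hharm : IsHarmonicMorphism G₂ G₁ φ μ) {x y : V₁}
    (hxy : G₁.Adj x y) :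
    ∑ v ∈ Finset.univ.filter (fun v => φ v = x), μ v
      = (Finset.univ.filter fun p : V₂ × V₂ =>
          G₂.Adj p.1 p.2 ∧ φ p.1 = x ∧ φ p.2 = y).card := by
  rw [Finset.card_filter, ← Finset.univ_product_univ, Finset.sum_product]
  rw [Finset.sum_filter]
  refine Finset.sum_congr rfl fun v _ => ?_
  by_cases hv : φ v = x
  · have hAdj : G₁.Adj (φ v) y := hv ▸ hxy
    rw [if_pos hv, ← hharm.2 v y hAdj, locHorizMult, Finset.card_filter]
    refine Finset.sum_congr rfl fun w _ => ?_
    simp [hv]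
  · rw [if_neg hv]
    refine (Finset.sum_eq_zero fun w _ => ?_).symm
    simp [hv]

lemma aux_pairs_swap {x y : V₁} :
    (Finset.univ.filter fun p : V₂ × V₂ =>
        G₂.Adj p.1 p.2 ∧ φ p.1 = x ∧ φ p.2 = y).card
      = (Finset.univ.filter fun p : V₂ × V₂ =>
          G₂.Adj p.1 p.2 ∧ φ p.1 = y ∧ φ p.2 = x).card := by
  refine Finset.card_bij' (fun p _ => p.swap) (fun p _ => p.swap) ?_ ?_ ?_ ?_ <;>
    simp only [Finset.mem_filter, Finset.mem_univ, true_and, Prod.fst_swap, Prod.snd_swap,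
      Prod.swap_swap]
  · rintro p ⟨h1, h2, h3⟩; exact ⟨h1.symm, h3, h2⟩
  · rintro p ⟨h1, h2, h3⟩; exact ⟨h1.symm, h3, h2⟩
  · intro p _; trivial
  · intro p _; trivial

lemma aux_fiber_sum_adj (hharm : IsHarmonicMorphism G₂ G₁ φ μ) {x y : V₁}
    (hxy : G₁.Adj x y) :
    ∑ v ∈ Finset.univ.filter (fun v => φ v = x), μ v
      = ∑ v ∈ Finset.univ.filter (fun v => φ v = y), μ v := by
  rw [aux_fiber_sum_eq_card G₂ G₁ φ μ hharm hxy,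
    aux_fiber_sum_eq_card G₂ G₁ φ μ hharm hxy.symm, aux_pairs_swap]

/-- Every fiber contains a vertex of positive horizontal multiplicity. -/
lemma aux_fiber_pos (hconn₁ : G₁.Connected) (hconn₂ : G₂.Connected)
    (hharm : IsHarmonicMorphism G₂ G₁ φ μ) (hnc : ∃ v w : V₂, φ v ≠ φ w) (x : V₁) :
    ∃ u : V₂, φ u = x ∧ 0 < μ u := by
  -- there is a non-vertical edge
  have hedge : ∃ v w : V₂, G₂.Adj v w ∧ φ v ≠ φ w := by
    by_contra h
    push_neg at h
    obtain ⟨v, w, hvw⟩ := hnc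
    exact hvw (aux_const_of_preconnected hconn₂.preconnected
      (fun a b hab => h a b hab) v w)
  obtain ⟨v, w, hvw, hne⟩ := hedge
  have hAdj : G₁.Adj (φ v) (φ w) := (hharm.1 hvw).resolve_left hne
  have hμv : 0 < μ v := by
    rw [← hharm.2 v (φ w) hAdj]
    exact Finset.card_pos.2 ⟨w, by simp [hvw]⟩
  have hmv : 0 < ∑ u ∈ Finset.univ.filter (fun u => φ u = φ v), μ u :=
    lt_of_lt_of_le hμv (Finset.single_le_sum (fun _ _ => Nat.zero_le _) (by simp))
  have hconst : ∑ u ∈ Finset.univ.filter (fun u => φ u = φ v), μ u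
      = ∑ u ∈ Finset.univ.filter (fun u => φ u = x), μ u :=
    aux_const_of_preconnected hconn₁.preconnected
      (fun a b hab => aux_fiber_sum_adj G₂ G₁ φ μ hharm hab) (φ v) x
  rw [hconst] at hmv
  obtain ⟨u, hu, hμu⟩ := Finset.exists_ne_zero_of_sum_ne_zero (Nat.pos_iff_ne_zero.1 hmv)
  exact ⟨u, (Finset.mem_filter.1 hu).2, Nat.pos_of_ne_zero hμu⟩

/-- The fiberwise sum of `μ` is a constant (the degree). -/
lemma aux_fiber_const (hconn₁ : G₁.Connected)
    (hharm : IsHarmonicMorphism G₂ G₁ φ μ) (x y : V₁) :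
    ∑ v ∈ Finset.univ.filter (fun v => φ v = x), μ v
      = ∑ v ∈ Finset.univ.filter (fun v => φ v = y), μ v :=
  aux_const_of_preconnected hconn₁.preconnected
    (fun a b hab => aux_fiber_sum_adj G₂ G₁ φ μ hharm hab) x y

end Degree

section LinAlg

variable {V : Type*} [Fintype V] [DecidableEq V]

/-- Maximum principle: the rational kernel of an arithmetical Laplacian on a connected
graph is spanned by the (positive) vector `R`. -/
lemma aux_ker_lap (G : SimpleGraph V) [DecidableRel G.Adj] (hconn : G.Connected)
    (R S : V → ℤ) (hR : ∀ v, 0 < R v) (hLR : arithLaplacian G S *ᵥ R = 0)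
    (u : V → ℚ) (hu : (arithLaplacian G S).map (Int.cast : ℤ → ℚ) *ᵥ u = 0) :
    ∃ q : ℚ, u = fun v => q * (R v : ℚ) := by
  have : Nonempty V := hconn.nonempty
  have hRq : ∀ v, (0 : ℚ) < (R v : ℚ) := fun v => by exact_mod_cast hR v
  obtain ⟨v₀, -, hmax⟩ := Finset.exists_max_image Finset.univ
    (fun v => u v / (R v : ℚ)) Finset.univ_nonempty
  set q : ℚ := u v₀ / (R v₀ : ℚ) with hq
  set w : V → ℚ := fun v => u v - q * (R v : ℚ) with hw
  have hw0 : ∀ v, w v ≤ 0 := by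
    intro v
    have := hmax v (Finset.mem_univ v)
    have : u v ≤ q * (R v : ℚ) := (div_le_iff₀ (hRq v)).1 (by simpa [hq] using this)
    simpa [hw] using sub_nonpos.2 this
  have hLRq : (arithLaplacian G S).map (Int.cast : ℤ → ℚ) *ᵥ (fun v => ((R v : ℤ) : ℚ)) = 0 := by
    rw [aux_cast_mulVec, hLR]
    funext x; simp
  have hLw : (arithLaplacian G S).map (Int.cast : ℤ → ℚ) *ᵥ w = 0 := by
    have hsub : w = u - q • (fun v => ((R v : ℤ) : ℚ)) := by
      funext v; simp [hw, smul_eq_mul]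
    rw [hsub, Matrix.mulVec_sub, hu, Matrix.mulVec_smul, hLRq]
    simp
  -- the zero set of w is closed under adjacency
  have hclosed : ∀ ⦃a b : V⦄, G.Adj a b → w a = 0 → w b = 0 := by
    intro a b hab ha
    have h0 : (0 : ℚ) = S a * w a - ∑ y ∈ G.neighborFinset a, w y := by
      rw [← aux_lap_mulVec_apply G S w a, hLw]; rfl
    rw [ha, mul_zero, zero_sub, eq_comm, neg_eq_zero] at h0
    have := (Finset.sum_eq_zero_iff_of_nonpos (fun y _ => hw0 y)).1 h0 b
      (by rwa [SimpleGraph.mem_neighborFinset])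
    exact this
  have hv₀ : w v₀ = 0 := by
    simp only [hw, hq]
    rw [div_mul_cancel₀ _ (ne_of_gt (hRq v₀)), sub_self]
  have hall : ∀ v, w v = 0 := fun v =>
    aux_prop_of_reachable hclosed (hconn.preconnected v₀ v) hv₀
  exact ⟨q, funext fun v => by have := hall v; simp [hw] at this; linarith⟩

/-- Surjectivity onto degree-zero part: rank argument. -/
lemma aux_range_lap (L : Matrix V V ℚ) (R : V → ℚ) (hsymm : Lᵀ = L)
    (hLR : L *ᵥ R = 0) (hR0 : R ≠ 0)
    (hker : ∀ u, L *ᵥ u = 0 → ∃ q : ℚ, u = q • R)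
    (δ : V → ℚ) (hδ : R ⬝ᵥ δ = 0) : ∃ f, L *ᵥ f = δ := by
  classical
  set T := L.mulVecLin with hT
  set F : (V → ℚ) →ₗ[ℚ] ℚ :=
    { toFun := fun x => R ⬝ᵥ x
      map_add' := fun a b => dotProduct_add R a b
      map_smul' := fun c a => by simp } with hF
  have hTker : LinearMap.ker T = Submodule.span ℚ {R} := by
    apply le_antisymm
    · intro x hx
      obtain ⟨c, hc⟩ := hker x (by simpa [hT] using hx)
      exact hc ▸ Submodule.smul_mem _ c (Submodule.mem_span_singleton_self R)
    · rw [Submodule.span_singleton_le_iff_mem]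
      simpa [hT] using hLR
  have hkerdim : Module.finrank ℚ (LinearMap.ker T) = 1 := by
    rw [hTker]; exact finrank_span_singleton hR0
  have hrangele : LinearMap.range T ≤ LinearMap.ker F := by
    rintro x ⟨g, rfl⟩
    show R ⬝ᵥ (L *ᵥ g) = 0
    rw [Matrix.dotProduct_mulVec]
    have hv : R ᵥ* L = 0 := by rw [← hsymm, Matrix.vecMul_transpose, hLR]
    rw [hv, zero_dotProduct]
  have hRR : R ⬝ᵥ R ≠ 0 := fun h => hR0 (dotProduct_self_eq_zero.1 h)
  have hFrange : LinearMap.range F = ⊤ := LinearMap.range_eq_top.2 fun q =>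
    ⟨(q / (R ⬝ᵥ R)) • R, by
      show R ⬝ᵥ ((q / (R ⬝ᵥ R)) • R) = q
      rw [dotProduct_smul, smul_eq_mul, div_mul_cancel₀ _ hRR]⟩
  have hn : Module.finrank ℚ (LinearMap.range T) = Module.finrank ℚ (LinearMap.ker F) := by
    have h1 := LinearMap.finrank_range_add_finrank_ker T
    have h2 := LinearMap.finrank_range_add_finrank_ker F
    rw [hkerdim] at h1
    rw [hFrange] at h2
    simp only [finrank_top] at h2
    have : Module.finrank ℚ ℚ = 1 := Module.finrank_self ℚ
    omega
  have heq : LinearMap.range T = LinearMap.ker F :=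
    Submodule.eq_of_le_of_finrank_eq hrangele hn
  have : δ ∈ LinearMap.ker F := by simpa [hF] using hδ
  rw [← heq] at this
  obtain ⟨f, hf⟩ := this
  exact ⟨f, by simpa [hT] using hf⟩

end LinAlg

section Descend

variable {V₁ V₂ : Type*} [Fintype V₁] [Fintype V₂] [DecidableEq V₁] [DecidableEq V₂]

lemma aux_lap_symm (G : SimpleGraph V₁) [DecidableRel G.Adj] (S : V₁ → ℤ) {α : Type*}
    [CommRing α] : ((arithLaplacian G S).map (Int.cast : ℤ → α))ᵀ
      = (arithLaplacian G S).map (Int.cast : ℤ → α) := by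
  rw [← Matrix.transpose_map]
  congr 1
  rw [arithLaplacian, Matrix.transpose_sub, Matrix.diagonal_transpose,
    SimpleGraph.transpose_adjMatrix]

/-- Key injectivity step: if the pullback of a degree-zero divisor is principal on `Γ₂`,
then the divisor is principal on `Γ₁`. -/
lemma aux_descend (G₁ : SimpleGraph V₁) [DecidableRel G₁.Adj]
    (G₂ : SimpleGraph V₂) [DecidableRel G₂.Adj]
    (hconn₁ : G₁.Connected) (hconn₂ : G₂.Connected)
    (φ : V₂ → V₁) (μ : V₂ → ℕ) (hharm : IsHarmonicMorphism G₂ G₁ φ μ)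
    (hnc : ∃ v w : V₂, φ v ≠ φ w)
    (R₁ S₁ : V₁ → ℤ) (hR₁pos : ∀ v, 0 < R₁ v)
    (hL₁R₁ : arithLaplacian G₁ S₁ *ᵥ R₁ = 0)
    (δ : V₁ → ℤ) (hδ : R₁ ⬝ᵥ δ = 0) (g : V₂ → ℤ)
    (hg : arithLaplacian G₂ (fun v => (μ v : ℤ) * S₁ (φ v) + (vertMult G₂ φ v : ℤ)) *ᵥ g
      = fun v => (μ v : ℤ) * δ (φ v)) :
    ∃ f : V₁ → ℤ, arithLaplacian G₁ S₁ *ᵥ f = δ := by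
  classical
  have : Nonempty V₁ := hconn₁.nonempty
  set S₂ : V₂ → ℤ := fun v => (μ v : ℤ) * S₁ (φ v) + (vertMult G₂ φ v : ℤ) with hS₂
  set L₁q : Matrix V₁ V₁ ℚ := (arithLaplacian G₁ S₁).map (Int.cast : ℤ → ℚ) with hL₁q
  set L₂q : Matrix V₂ V₂ ℚ := (arithLaplacian G₂ S₂).map (Int.cast : ℤ → ℚ) with hL₂q
  set R₁q : V₁ → ℚ := fun x => (R₁ x : ℚ) with hR₁q
  have hL₁R₁q : L₁q *ᵥ R₁q = 0 := by
    rw [hL₁q, hR₁q, aux_cast_mulVec, hL₁R₁]; funext x; simp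
  have hR₁q0 : R₁q ≠ 0 := by
    intro h
    have := congrFun h (Classical.arbitrary V₁)
    have h2 := hR₁pos (Classical.arbitrary V₁)
    simp only [hR₁q, Pi.zero_apply, Int.cast_eq_zero] at this
    omega
  -- pullback arithmetical structure property
  have hL₂R₂ : arithLaplacian G₂ S₂ *ᵥ (fun v => R₁ (φ v)) = 0 := by
    have h := aux_lap_pullback (α := ℤ) G₂ G₁ φ μ hharm S₁ R₁
    have hm1 : ∀ (M : Matrix V₂ V₂ ℤ), M.map (Int.cast : ℤ → ℤ) = M := by
      intro M; ext i j; simp [Matrix.map_apply]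
    have hm2 : ∀ (M : Matrix V₁ V₁ ℤ), M.map (Int.cast : ℤ → ℤ) = M := by
      intro M; ext i j; simp [Matrix.map_apply]
    rw [hm1, hm2, ← hS₂] at h
    rw [h]
    funext v
    rw [hL₁R₁]
    simp
  -- rationally solve on Γ₁
  obtain ⟨f₀, hf₀⟩ := aux_range_lap L₁q R₁q (aux_lap_symm G₁ S₁) hL₁R₁q hR₁q0
    (fun u hu => by
      obtain ⟨q, hq⟩ := aux_ker_lap G₁ hconn₁ R₁ S₁ hR₁pos hL₁R₁ u hu
      exact ⟨q, by funext v; rw [hq]; simp [hR₁q, smul_eq_mul]⟩)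
    (fun x => (δ x : ℚ))
    (by
      have : R₁q ⬝ᵥ (fun x => (δ x : ℚ)) = ((R₁ ⬝ᵥ δ : ℤ) : ℚ) := by
        simp [dotProduct, hR₁q]
      rw [this, hδ]; simp)
  -- compare with g over ℚ
  have h1 : L₂q *ᵥ (fun v => f₀ (φ v)) = fun v => (μ v : ℚ) * (δ (φ v) : ℚ) := by
    rw [hL₂q, hS₂, aux_lap_pullback (α := ℚ) G₂ G₁ φ μ hharm S₁ f₀]
    funext v
    rw [← hL₁q, hf₀]
  have h2 : L₂q *ᵥ (fun v => (g v : ℚ)) = fun v => (μ v : ℚ) * (δ (φ v) : ℚ) := by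
    rw [hL₂q, aux_cast_mulVec, hg]
    funext v; push_cast; ring
  have h3 : L₂q *ᵥ (fun v => (g v : ℚ) - f₀ (φ v)) = 0 := by
    have hfe : (fun v => (g v : ℚ) - f₀ (φ v))
        = (fun v => (g v : ℚ)) - (fun v => f₀ (φ v)) := rfl
    rw [hfe, Matrix.mulVec_sub, h1, h2, sub_self]
  obtain ⟨q, hq⟩ := aux_ker_lap G₂ hconn₂ (fun v => R₁ (φ v)) S₂
    (fun v => hR₁pos (φ v)) hL₂R₂ _ h3
  set f₁ : V₁ → ℚ := fun x => f₀ x + q * (R₁ x : ℚ) with hf₁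
  have hgf : ∀ v, (g v : ℚ) = f₁ (φ v) := by
    intro v
    have := congrFun hq v
    simp only [hf₁]
    linarith
  have hL₁f₁ : L₁q *ᵥ f₁ = fun x => (δ x : ℚ) := by
    have hfe : f₁ = f₀ + q • R₁q := by
      funext x; simp [hf₁, hR₁q, smul_eq_mul]
    rw [hfe, Matrix.mulVec_add, Matrix.mulVec_smul, hf₀, hL₁R₁q, smul_zero, add_zero]
  -- integrality via surjectivity of φ
  have hfiber := aux_fiber_pos G₂ G₁ φ μ hconn₁ hconn₂ hharm hnc
  choose u hu hμu using hfiber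
  refine ⟨fun x => g (u x), ?_⟩
  have hf₁f : f₁ = fun x => ((g (u x) : ℤ) : ℚ) := by
    funext x
    rw [show f₁ x = f₁ (φ (u x)) by rw [hu x], ← hgf (u x)]
  have hfin : L₁q *ᵥ (fun x => ((g (u x) : ℤ) : ℚ)) = fun x => (δ x : ℚ) := by
    rw [← hf₁f, hL₁f₁]
  rw [hL₁q, aux_cast_mulVec] at hfin
  funext x
  have := congrFun hfin x
  exact_mod_cast this

end Descend

section IntPull

variable {V₁ V₂ : Type*} [Fintype V₁] [Fintype V₂] [DecidableEq V₁] [DecidableEq V₂]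

lemma aux_lap_pullback_int (G₁ : SimpleGraph V₁) [DecidableRel G₁.Adj]
    (G₂ : SimpleGraph V₂) [DecidableRel G₂.Adj] (φ : V₂ → V₁) (μ : V₂ → ℕ)
    (hharm : IsHarmonicMorphism G₂ G₁ φ μ) (S₁ : V₁ → ℤ) (f : V₁ → ℤ) :
    arithLaplacian G₂ (fun v => (μ v : ℤ) * S₁ (φ v) + (vertMult G₂ φ v : ℤ))
        *ᵥ (fun v => f (φ v))
      = fun v => (μ v : ℤ) * (arithLaplacian G₁ S₁ *ᵥ f) (φ v) := by
  have h := aux_lap_pullback (α := ℤ) G₂ G₁ φ μ hharm S₁ f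
  have hm1 : ∀ (M : Matrix V₂ V₂ ℤ), M.map (Int.cast : ℤ → ℤ) = M := by
    intro M; ext i j; simp [Matrix.map_apply]
  have hm2 : ∀ (M : Matrix V₁ V₁ ℤ), M.map (Int.cast : ℤ → ℤ) = M := by
    intro M; ext i j; simp [Matrix.map_apply]
  rw [hm1, hm2] at h
  exact h

end IntPull

/-- `|K(Γ₁;R₁,S₁)|` divides `|K(Γ₂;R₂,S₂)|`. -/
theorem critical_group_order_dvd {V₁ V₂ : Type*} [Fintype V₁] [Fintype V₂]
    [DecidableEq V₁] [DecidableEq V₂]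
    (G₁ : SimpleGraph V₁) [DecidableRel G₁.Adj] (G₂ : SimpleGraph V₂) [DecidableRel G₂.Adj]
    (hconn₁ : G₁.Connected) (hconn₂ : G₂.Connected)
    (hcard₁ : 2 ≤ Fintype.card V₁) (hcard₂ : 2 ≤ Fintype.card V₂)
    (φ : V₂ → V₁) (μ : V₂ → ℕ)
    (hharm : IsHarmonicMorphism G₂ G₁ φ μ)
    (hnc : ∃ v w : V₂, φ v ≠ φ w)
    (R₁ S₁ : V₁ → ℤ) (hA₁ : IsArithStructure G₁ R₁ S₁) :
    Nat.card (CriticalGroup G₁ R₁ S₁) ∣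
      Nat.card (CriticalGroup G₂ (fun v => R₁ (φ v))
        (fun v => (μ v : ℤ) * S₁ (φ v) + (vertMult G₂ φ v : ℤ))) := by
  classical
  obtain ⟨hR₁pos, hS₁pos, hgcd, hL₁R₁⟩ := hA₁
  obtain ⟨x₀⟩ : Nonempty V₁ := hconn₁.nonempty
  -- notation
  set S₂ : V₂ → ℤ := fun v => (μ v : ℤ) * S₁ (φ v) + (vertMult G₂ φ v : ℤ) with hS₂
  set R₂ : V₂ → ℤ := fun v => R₁ (φ v) with hR₂
  -- the pullback map on divisors
  set pull : (V₁ → ℤ) → (V₂ → ℤ) := fun δ v => (μ v : ℤ) * δ (φ v) with hpull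
  -- it maps Div⁰ to Div⁰ (using constancy of fiberwise degree)
  have hpull_div0 : ∀ δ : V₁ → ℤ, R₁ ⬝ᵥ δ = 0 → R₂ ⬝ᵥ pull δ = 0 := by
    intro δ hδ
    have h1 : R₂ ⬝ᵥ pull δ
        = ∑ x : V₁, ((∑ v ∈ Finset.univ.filter (fun v => φ v = x), μ v : ℕ) : ℤ)
            * (R₁ x * δ x) := by
      rw [dotProduct,
        ← Finset.sum_fiberwise Finset.univ φ (fun v => R₂ v * pull δ v)]
      refine Finset.sum_congr rfl fun x _ => ?_
      rw [Nat.cast_sum, Finset.sum_mul]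
      refine Finset.sum_congr rfl fun v hv => ?_
      have hxv : φ v = x := (Finset.mem_filter.1 hv).2
      simp only [hR₂, hpull, hxv]
      ring
    have h2 : ∀ x : V₁, (∑ v ∈ Finset.univ.filter (fun v => φ v = x), μ v)
        = ∑ v ∈ Finset.univ.filter (fun v => φ v = x₀), μ v := fun x =>
      aux_fiber_const G₂ G₁ φ μ hconn₁ hharm x x₀
    rw [h1, Finset.sum_congr rfl fun x _ => by rw [h2 x], ← Finset.mul_sum]
    have h3 : ∑ x : V₁, R₁ x * δ x = 0 := hδ
    rw [h3, mul_zero]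
  -- the additive hom on Div⁰
  set pullHom : Div0 R₁ →+ Div0 R₂ :=
    AddMonoidHom.mk' (fun δ => ⟨pull δ.1, hpull_div0 δ.1 δ.2⟩)
      (by intro a b; ext v; simp only [hpull, AddSubgroup.coe_add, Pi.add_apply]; ring)
    with hpullHom
  set Ψ : Div0 R₁ →+ CriticalGroup G₂ R₂ S₂ :=
    (QuotientAddGroup.mk' ((PrinSubgroup G₂ S₂).addSubgroupOf (Div0 R₂))).comp pullHom
    with hΨ
  -- Ψ kills the principal subgroup
  have hΨker : ∀ δ : Div0 R₁, δ ∈ (PrinSubgroup G₁ S₁).addSubgroupOf (Div0 R₁) → Ψ δ = 0 := by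
    intro δ hδ
    rw [AddSubgroup.mem_addSubgroupOf] at hδ
    obtain ⟨f, hf⟩ := hδ
    rw [hΨ, AddMonoidHom.comp_apply, QuotientAddGroup.mk'_apply,
      QuotientAddGroup.eq_zero_iff, AddSubgroup.mem_addSubgroupOf]
    refine ⟨fun v => f (φ v), ?_⟩
    rw [Matrix.mulVecLin_apply] at hf ⊢
    rw [aux_lap_pullback_int G₁ G₂ φ μ hharm S₁ f, hf]
    rfl
  -- descend to the critical group
  set Φ : CriticalGroup G₁ R₁ S₁ →+ CriticalGroup G₂ R₂ S₂ :=
    QuotientAddGroup.lift ((PrinSubgroup G₁ S₁).addSubgroupOf (Div0 R₁)) Ψ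
      (show _ ≤ Ψ.ker from fun δ hδ => AddMonoidHom.mem_ker.2 (hΨker δ hδ)) with hΦ
  -- Φ is injective
  have hinj : Function.Injective Φ := by
    rw [injective_iff_map_eq_zero]
    intro c hc
    induction c using QuotientAddGroup.induction_on with
    | H δ =>
      rw [hΦ, QuotientAddGroup.lift_mk'] at hc
      rw [hΨ, AddMonoidHom.comp_apply, QuotientAddGroup.mk'_apply,
        QuotientAddGroup.eq_zero_iff, AddSubgroup.mem_addSubgroupOf] at hc
      obtain ⟨g, hg⟩ := hc
      rw [Matrix.mulVecLin_apply] at hg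
      obtain ⟨f, hf⟩ := aux_descend G₁ G₂ hconn₁ hconn₂ φ μ hharm hnc R₁ S₁
        hR₁pos hL₁R₁ δ.1 δ.2 g (by rw [hg]; rfl)
      rw [QuotientAddGroup.eq_zero_iff, AddSubgroup.mem_addSubgroupOf]
      exact ⟨f, by rw [Matrix.mulVecLin_apply]; exact hf⟩
  exact AddSubgroup.card_dvd_of_injective Φ hinj
end

section
/- Riemann–Hurwitz for arithmetical structures: let φ : Γ₂ → Γ₁ be a non-constant harmonic morphism of connected graphs with pullback arithmetical structures, and let gᵢ be the arithmetical genus of Γᵢ defined by 2gᵢ − 2 = Σ_v Rᵢ(v)(Sᵢ(v) − 2). Then 2g₂ − 2 = deg(φ)(2g₁ − 2) + Σ_{v ∈ V(Γ₂)} R₂(v)(2μ(v) − 2 + ν(v)). -/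
open Matrix Finset

/-- Riemann–Hurwitz for arithmetical structures. -/
theorem riemann_hurwitz {V₁ V₂ : Type*} [Fintype V₁] [Fintype V₂]
    [DecidableEq V₁] [DecidableEq V₂]
    (G₁ : SimpleGraph V₁) [DecidableRel G₁.Adj] (G₂ : SimpleGraph V₂) [DecidableRel G₂.Adj]
    (hconn₁ : G₁.Connected) (hconn₂ : G₂.Connected)
    (hcard₁ : 2 ≤ Fintype.card V₁) (hcard₂ : 2 ≤ Fintype.card V₂)
    (φ : V₂ → V₁) (μ : V₂ → ℕ)
    (hharm : IsHarmonicMorphism G₂ G₁ φ μ)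
    (hnc : ∃ v w : V₂, φ v ≠ φ w)
    (R₁ S₁ : V₁ → ℤ) (hA₁ : IsArithStructure G₁ R₁ S₁)
    (d : ℕ) (hdeg : IsDegreeOf G₂ G₁ φ d)
    (g₁ g₂ : ℤ)
    (hg₁ : 2 * g₁ - 2 = ∑ x, R₁ x * (S₁ x - 2))
    (hg₂ : 2 * g₂ - 2 =
      ∑ v, R₁ (φ v) * (((μ v : ℤ) * S₁ (φ v) + (vertMult G₂ φ v : ℤ)) - 2)) :
    2 * g₂ - 2 = (d : ℤ) * (2 * g₁ - 2) +
      ∑ v, R₁ (φ v) * (2 * (μ v : ℤ) - 2 + (vertMult G₂ φ v : ℤ)) := by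
  -- every vertex of V₁ has a neighbor
  have hnbr : ∀ x : V₁, ∃ y, G₁.Adj x y := by
    intro x
    obtain ⟨w, hw⟩ := Fintype.exists_ne_of_one_lt_card hcard₁ x
    obtain ⟨p⟩ := hconn₁.preconnected x w
    exact ⟨p.getVert 1, SimpleGraph.Walk.adj_snd
      (SimpleGraph.Walk.not_nil_of_ne (Ne.symm hw))⟩
  -- fiber sum of μ is d
  have hfiber : ∀ x : V₁, ∑ v ∈ Finset.univ.filter (fun v => φ v = x), (μ v : ℤ)
      = (d : ℤ) := by
    intro x
    obtain ⟨y, hxy⟩ := hnbr x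
    have h1 : ∀ v ∈ Finset.univ.filter (fun v => φ v = x),
        μ v = locHorizMult G₂ φ v y := by
      intro v hv
      rw [Finset.mem_filter] at hv
      rw [hharm.2 v y (hv.2 ▸ hxy)]
    have h2 : ∑ v ∈ Finset.univ.filter (fun v => φ v = x), μ v = d := by
      rw [Finset.sum_congr rfl h1, ← hdeg hxy, Finset.card_filter,
        Fintype.sum_prod_type, Finset.sum_filter]
      refine Finset.sum_congr rfl fun v _ => ?_
      by_cases hv : φ v = x
      · rw [if_pos hv, locHorizMult, Finset.card_filter]
        exact Finset.sum_congr rfl fun w _ => by simp [hv]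
      · simp [hv]
    exact_mod_cast congrArg (Nat.cast : ℕ → ℤ) h2
  rw [hg₂, hg₁]
  have key : ∑ v, R₁ (φ v) * (((μ v : ℤ) * S₁ (φ v) + (vertMult G₂ φ v : ℤ)) - 2)
      = (∑ v, (μ v : ℤ) * (R₁ (φ v) * (S₁ (φ v) - 2)))
        + ∑ v, R₁ (φ v) * (2 * (μ v : ℤ) - 2 + (vertMult G₂ φ v : ℤ)) := by
    rw [← Finset.sum_add_distrib]
    exact Finset.sum_congr rfl (fun v _ => by ring)
  rw [key]
  congr 1
  calc ∑ v, (μ v : ℤ) * (R₁ (φ v) * (S₁ (φ v) - 2))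
      = ∑ x, ∑ v ∈ Finset.univ.filter (fun v => φ v = x),
          (μ v : ℤ) * (R₁ (φ v) * (S₁ (φ v) - 2)) :=
        (Finset.sum_fiberwise _ _ _).symm
    _ = ∑ x, (d : ℤ) * (R₁ x * (S₁ x - 2)) := by
        refine Finset.sum_congr rfl fun x _ => ?_
        have : ∀ v ∈ Finset.univ.filter (fun v => φ v = x),
            (μ v : ℤ) * (R₁ (φ v) * (S₁ (φ v) - 2))
              = (μ v : ℤ) * (R₁ x * (S₁ x - 2)) := by
          intro v hv
          rw [Finset.mem_filter] at hv
          rw [hv.2]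
        rw [Finset.sum_congr rfl this, ← Finset.sum_mul, hfiber]
    _ = (d : ℤ) * ∑ x, R₁ x * (S₁ x - 2) := by rw [Finset.mul_sum]
end

section
/- Let φ : Γ₂ → Γ₁ be a non-constant harmonic morphism of connected graphs, (R₁,S₁) an arithmetical structure on Γ₁ with pullback (R₂,S₂), and gᵢ the arithmetical genera. Then the degree of the ramification divisor is nonnegative, Σ_v R₂(v)(2μ(v) − 2 + ν(v)) ≥ 0, and consequently g₂ ≥ g₁. -/
open Matrix Finset

section Aux
universe u

/-- Connectivity of a multigraph given by its adjacency matrix. -/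
def ConnMat {V : Type*} [Fintype V] (A : V → V → ℕ) : Prop :=
  ∀ P : Finset V, P.Nonempty → (∀ u ∈ P, ∀ w, A u w ≠ 0 → w ∈ P) → P = Finset.univ

lemma sum_erase_eq {V : Type*} [Fintype V] [DecidableEq V]
    (f : V → ℤ) (v : V) :
    ∑ w ∈ univ.erase v, f w = (∑ w, f w) - f v := by
  have h2 : ∑ w ∈ univ.erase v, f w + f v = ∑ w, f w :=
    Finset.sum_erase_add _ _ (by simp)
  linarith

lemma sum_erase_erase {V : Type*} [Fintype V] [DecidableEq V]
    (f : V → ℤ) {u v : V} (huv : u ≠ v) :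
    ∑ w ∈ (univ.erase v).erase u, f w = (∑ w, f w) - f u - f v := by
  have h1 : ∑ w ∈ (univ.erase v).erase u, f w + f u = ∑ w ∈ univ.erase v, f w :=
    Finset.sum_erase_add _ _ (by simp [huv])
  have h2 := sum_erase_eq f v
  linarith

/-- Blow-down of vertex `v` in the multigraph `A`. -/
def blowDown {V : Type*} [DecidableEq V] (A : V → V → ℕ) (v : V) :
    {u : V // u ≠ v} → {u : V // u ≠ v} → ℕ :=
  fun u w => if (u : V) = (w : V) then 0 else A u w + A u v * A w v

theorem lorenzini (n : ℕ) : ∀ (V : Type u) (_ : Fintype V) (_ : DecidableEq V),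
    Fintype.card V = n →
    ∀ (A : V → V → ℕ) (R S : V → ℤ),
    (∀ u w, A u w = A w u) → (∀ u, A u u = 0) →
    (∀ v, 0 < R v) → (∀ v, 0 < S v) → Finset.univ.gcd R = 1 →
    (∀ v, S v * R v = ∑ w, (A v w : ℤ) * R w) → ConnMat A →
    -2 ≤ ∑ v, R v * (S v - 2) := by
  induction n using Nat.strong_induction_on with
  | _ n IH =>
    intro V _ _ hcard A R S hsym hdiag hR hS hgcd heq hconn
    by_cases hall : ∀ v, 2 ≤ S v
    · have h0 : (0:ℤ) ≤ ∑ v, R v * (S v - 2) := by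
        apply Finset.sum_nonneg
        intro v _
        have := hall v; have := hR v; nlinarith
      linarith
    · push_neg at hall
      obtain ⟨v, hv2⟩ := hall
      have hSv : S v = 1 := by have := hS v; omega
      have hRv : R v = ∑ w, (A w v : ℤ) * R w := by
        have h := heq v
        rw [hSv, one_mul] at h
        rw [h]
        exact Finset.sum_congr rfl (fun w _ => by rw [hsym v w])
      have hne : Nonempty V := ⟨v⟩
      have hone : 1 ≤ Fintype.card V := Fintype.card_pos
      -- card = 1 is impossible
      have hcard1 : Fintype.card V ≠ 1 := by
        intro h1
        have hall1 : ∀ w : V, w = v :=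
          fun w => Fintype.card_le_one_iff.mp (le_of_eq h1) w v
        have hzero : ∑ w, (A v w : ℤ) * R w = 0 := by
          apply Finset.sum_eq_zero
          intro w _
          rw [hall1 w, hdiag v]; ring
        have h := heq v
        rw [hzero] at h
        have := hR v; have := hS v
        nlinarith
      by_cases hcard2 : Fintype.card V = 2
      -- base case: two vertices
      · obtain ⟨u, hu⟩ := Fintype.exists_ne_of_one_lt_card (by omega) v
        have huniv : (univ : Finset V) = {u, v} := by
          symm
          apply Finset.eq_of_subset_of_card_le (Finset.subset_univ _)
          rw [Finset.card_univ, hcard2, Finset.card_pair hu]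
        have hsum : ∀ f : V → ℤ, ∑ w, f w = f u + f v := by
          intro f
          rw [huniv, Finset.sum_pair hu]
        obtain ⟨k, hk⟩ : ∃ k, A v u = k := ⟨_, rfl⟩
        have hkvu : R v = (k:ℤ) * R u := by
          rw [hRv, hsum, hdiag v, hsym u v, hk]
          push_cast; ring
        have hk1 : 1 ≤ k := by
          rcases Nat.eq_zero_or_pos k with h | h
          · rw [h] at hkvu; norm_num at hkvu
            have := hR v; have := hR u; nlinarith
          · exact h
        have hequ : S u * R u = (k:ℤ) * R v := by
          have h := heq u
          rw [hsum, hdiag u, hsym u v, hk] at h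
          rw [h]; push_cast; ring
        rw [hsum]
        have hsumval : R u * (S u - 2) + R v * (S v - 2)
            = R u * ((k:ℤ)^2 - k - 2) := by
          rw [hSv]
          nlinarith [hequ, hkvu]
        rw [hsumval]
        by_cases hk2 : 2 ≤ k
        · have h2k : (2:ℤ) ≤ (k:ℤ) := by exact_mod_cast hk2
          have hfac : (0:ℤ) ≤ (k:ℤ)^2 - k - 2 := by nlinarith
          have := mul_nonneg (le_of_lt (hR u)) hfac
          linarith
        · have hkk : k = 1 := by omega
          rw [hkk] at hkvu
          norm_num at hkvu
          have hRu1 : R u = 1 := by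
            apply Int.eq_one_of_dvd_one (le_of_lt (hR u))
            rw [← hgcd]
            apply Finset.dvd_gcd
            intro w _
            have hw : w ∈ ({u, v} : Finset V) := by rw [← huniv]; exact Finset.mem_univ w
            rcases Finset.mem_insert.mp hw with hw | hw
            · rw [hw]
            · rw [Finset.mem_singleton.mp hw, ← hkvu]
          rw [hkk, hRu1]; norm_num
      -- main case: at least three vertices, blow down v
      · have hcard3 : 3 ≤ n := by omega
        -- strict key inequality
        have key : ∀ u : V, u ≠ v → ((A u v : ℤ))^2 * R u < S u * R u := by
          intro u huv
          have hSplit : S u * R u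
              = (A u v : ℤ) * R v + ∑ w ∈ univ.erase v, (A u w : ℤ) * R w := by
            rw [heq u, sum_erase_eq (fun w => (A u w : ℤ) * R w) v]
            ring
          have hSplit2 : R v
              = (A u v : ℤ) * R u + ∑ w ∈ univ.erase u, (A w v : ℤ) * R w := by
            rw [hRv, sum_erase_eq (fun w => (A w v : ℤ) * R w) u, hsym u v]
            ring
          have hrest1 : (0:ℤ) ≤ ∑ w ∈ univ.erase v, (A u w : ℤ) * R w :=
            Finset.sum_nonneg fun w _ => mul_nonneg (by positivity) (le_of_lt (hR w))
          have hrest2 : (0:ℤ) ≤ ∑ w ∈ univ.erase u, (A w v : ℤ) * R w :=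
            Finset.sum_nonneg fun w _ => mul_nonneg (by positivity) (le_of_lt (hR w))
          by_cases h0 : A u v = 0
          · rw [h0]; push_cast
            have := hR u; have := hS u; nlinarith
          · have he1 : (1:ℤ) ≤ (A u v : ℤ) := by exact_mod_cast Nat.one_le_iff_ne_zero.mpr h0
            by_cases hcaseA : ∃ w, w ≠ v ∧ A u w ≠ 0
            · obtain ⟨w, hwv, hw⟩ := hcaseA
              have h1 : (1:ℤ) ≤ ∑ w ∈ univ.erase v, (A u w : ℤ) * R w := by
                calc (1:ℤ) ≤ (A u w : ℤ) * R w := by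
                      have : (1:ℤ) ≤ (A u w : ℤ) := by
                        exact_mod_cast Nat.one_le_iff_ne_zero.mpr hw
                      nlinarith [hR w]
                  _ ≤ ∑ w ∈ univ.erase v, (A u w : ℤ) * R w := by
                      apply Finset.single_le_sum
                        (f := fun w => (A u w : ℤ) * R w)
                        (fun w _ => mul_nonneg (by positivity) (le_of_lt (hR w)))
                      simp [hwv]
              nlinarith [hR u]
            · push_neg at hcaseA
              have hw2 : ∃ w, w ≠ u ∧ A w v ≠ 0 := by
                by_contra hno
                push_neg at hno
                have huniv2 := hconn {u, v} ⟨u, Finset.mem_insert_self u {v}⟩ ?_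
                · have : Fintype.card V ≤ 2 := by
                    rw [← Finset.card_univ, ← huniv2]
                    exact le_trans (Finset.card_insert_le _ _) (by simp)
                  omega
                · intro a ha w hw
                  rcases Finset.mem_insert.mp ha with rfl | ha
                  · have : w = v := by
                      by_contra hwv
                      exact hw (hcaseA w hwv)
                    rw [this]; exact Finset.mem_insert_of_mem (Finset.mem_singleton_self v)
                  · have hav : a = v := Finset.mem_singleton.mp ha
                    have : w = u := by
                      by_contra hwu
                      rw [hav, hsym v w] at hw
                      exact hw (hno w hwu)
                    rw [this]; exact Finset.mem_insert_self u {v}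
              obtain ⟨w, hwu, hw⟩ := hw2
              have h1 : (1:ℤ) ≤ ∑ w ∈ univ.erase u, (A w v : ℤ) * R w := by
                calc (1:ℤ) ≤ (A w v : ℤ) * R w := by
                      have : (1:ℤ) ≤ (A w v : ℤ) := by
                        exact_mod_cast Nat.one_le_iff_ne_zero.mpr hw
                      nlinarith [hR w]
                  _ ≤ _ := by
                      apply Finset.single_le_sum
                        (f := fun w => (A w v : ℤ) * R w)
                        (fun w _ => mul_nonneg (by positivity) (le_of_lt (hR w)))
                      simp [hwu]
              nlinarith [hR u]
        -- S' is positive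
        have hS' : ∀ u : V, u ≠ v → ((A u v : ℤ))^2 < S u :=
          fun u huv => lt_of_mul_lt_mul_right (key u huv) (le_of_lt (hR u))
        have key2 : ∀ u : {u : V // u ≠ v}, 0 < S u.1 - ((A u.1 v : ℤ))^2 :=
          fun u => by have := hS' u.1 u.2; linarith
        have hsub : ∀ f : V → ℤ, ∑ w ∈ univ.erase v, f w = ∑ w : {u : V // u ≠ v}, f w.1 := by
          intro f
          exact Finset.sum_subtype _ (by simp) f
        have hcard' : Fintype.card {u : V // u ≠ v} = n - 1 := by
          have h := Fintype.card_subtype_compl (fun u : V => u = v)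
          rw [Fintype.card_subtype_eq, hcard] at h
          exact h
        have hsym' : ∀ u w : {u : V // u ≠ v}, blowDown A v u w = blowDown A v w u := by
          intro u w
          by_cases h : (u : V) = (w : V)
          · simp [blowDown, h]
          · simp only [blowDown, if_neg h, if_neg (Ne.symm h)]
            rw [hsym u.1 w.1, Nat.mul_comm]
        have hdiag' : ∀ u : {u : V // u ≠ v}, blowDown A v u u = 0 := fun u => if_pos rfl
        have heq' : ∀ u : {u : V // u ≠ v}, (S u.1 - ((A u.1 v : ℤ))^2) * R u.1
            = ∑ w : {u : V // u ≠ v}, ((blowDown A v u w : ℕ) : ℤ) * R w.1 := by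
          intro u
          have e1 : ∑ w : {u : V // u ≠ v}, ((blowDown A v u w : ℕ) : ℤ) * R w.1
              = ∑ w ∈ univ.erase v,
                  ((if (u : V) = w then 0 else A u.1 w + A u.1 v * A w v : ℕ) : ℤ) * R w := by
            rw [hsub (fun w => ((if (u : V) = w then 0 else A u.1 w + A u.1 v * A w v : ℕ) : ℤ) * R w)]
            rfl
          have e2 : ∑ w ∈ univ.erase v,
                  ((if (u : V) = w then 0 else A u.1 w + A u.1 v * A w v : ℕ) : ℤ) * R w
              = ∑ w ∈ (univ.erase v).erase u.1,
                  ((A u.1 w + A u.1 v * A w v : ℕ) : ℤ) * R w := by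
            rw [← Finset.sum_erase_add (univ.erase v)
              (fun w => ((if (u : V) = w then 0 else A u.1 w + A u.1 v * A w v : ℕ) : ℤ) * R w)
              (show (u : V) ∈ univ.erase v by simp [u.2])]
            rw [if_pos rfl]
            push_cast
            rw [zero_mul, add_zero]
            apply Finset.sum_congr rfl
            intro w hw
            rw [if_neg (Ne.symm (Finset.ne_of_mem_erase hw))]
          have e3 : ∑ w ∈ (univ.erase v).erase u.1,
                  ((A u.1 w + A u.1 v * A w v : ℕ) : ℤ) * R w
              = ∑ w ∈ (univ.erase v).erase u.1,
                  ((A u.1 w : ℤ) * R w + (A u.1 v : ℤ) * ((A w v : ℤ) * R w)) := by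
            apply Finset.sum_congr rfl
            intro w _
            push_cast; ring
          have e4 := sum_erase_erase
            (fun w => ((A u.1 w : ℤ) * R w + (A u.1 v : ℤ) * ((A w v : ℤ) * R w))) u.2
          have e5 : ∑ w, ((A u.1 w : ℤ) * R w + (A u.1 v : ℤ) * ((A w v : ℤ) * R w))
              = S u.1 * R u.1 + (A u.1 v : ℤ) * R v := by
            rw [Finset.sum_add_distrib, ← Finset.mul_sum, ← heq u.1, ← hRv]
          rw [e1, e2, e3, e4, e5]
          simp only [hdiag]
          push_cast
          ring
        have hgcd' : (univ : Finset {u : V // u ≠ v}).gcd (fun u => R u.1) = 1 := by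
          have hdvd : ∀ b : V, (univ : Finset {u : V // u ≠ v}).gcd (fun u => R u.1) ∣ R b := by
            intro b
            by_cases hb : b = v
            · rw [hb, hRv]
              apply Finset.dvd_sum
              intro w _
              by_cases hw : w = v
              · rw [hw, hdiag v]; simp
              · exact Dvd.dvd.mul_left
                  (Finset.gcd_dvd (Finset.mem_univ (⟨w, hw⟩ : {u : V // u ≠ v}))) _
            · exact Finset.gcd_dvd (Finset.mem_univ (⟨b, hb⟩ : {u : V // u ≠ v}))
          have h1 : (univ : Finset {u : V // u ≠ v}).gcd (fun u => R u.1) ∣ (1 : ℤ) := by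
            rw [← hgcd]
            exact Finset.dvd_gcd (fun b _ => hdvd b)
          exact Int.eq_one_of_dvd_one
            (Int.nonneg_of_normalize_eq_self Finset.normalize_gcd) h1
        have hconn' : ConnMat (blowDown A v) := by
          intro P' hPne hPcl
          by_cases hcase : ∃ w ∈ P', A w.1 v ≠ 0
          · obtain ⟨w0, hw0P, hw0⟩ := hcase
            have hnbr : ∀ b, A b v ≠ 0 → ∃ hb : b ≠ v, (⟨b, hb⟩ : {u : V // u ≠ v}) ∈ P' := by
              intro b hb
              have hbv : b ≠ v := fun h => hb (h ▸ hdiag v)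
              refine ⟨hbv, ?_⟩
              by_cases hbw : b = (w0 : V)
              · have hbb : (⟨b, hbv⟩ : {u : V // u ≠ v}) = w0 := Subtype.ext hbw
                rw [hbb]; exact hw0P
              · apply hPcl w0 hw0P ⟨b, hbv⟩
                show (if ((w0 : V)) = b then 0 else A w0.1 b + A w0.1 v * A b v) ≠ 0
                rw [if_neg (fun h => hbw h.symm)]
                have := Nat.mul_pos (Nat.pos_of_ne_zero hw0) (Nat.pos_of_ne_zero hb)
                omega
            have huniv2 := hconn (insert v (P'.image Subtype.val))
              ⟨v, Finset.mem_insert_self v _⟩ ?_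
            · apply Finset.eq_univ_of_forall
              intro u'
              have hu' : (u' : V) ∈ insert v (P'.image Subtype.val) :=
                huniv2 ▸ Finset.mem_univ _
              rcases Finset.mem_insert.mp hu' with h | h
              · exact absurd h u'.2
              · obtain ⟨p, hpP, hpu⟩ := Finset.mem_image.mp h
                have hpe : p = u' := Subtype.ext hpu
                rwa [← hpe]
            · intro a ha w hw
              rcases Finset.mem_insert.mp ha with rfl | haQ
              · have hwv0 : A w a ≠ 0 := by rw [hsym w a]; exact hw
                obtain ⟨hwv, hp⟩ := hnbr w hwv0
                exact Finset.mem_insert_of_mem (Finset.mem_image_of_mem _ hp)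
              · obtain ⟨p, hpP, rfl⟩ := Finset.mem_image.mp haQ
                by_cases hwv : w = v
                · rw [hwv]; exact Finset.mem_insert_self v _
                · have hwp : (p : V) ≠ w := fun h => hw (h ▸ hdiag p.1)
                  have hblow : blowDown A v p ⟨w, hwv⟩ ≠ 0 := by
                    show (if ((p : V)) = w then 0 else A p.1 w + A p.1 v * A w v) ≠ 0
                    rw [if_neg hwp]
                    have := Nat.pos_of_ne_zero hw
                    omega
                  exact Finset.mem_insert_of_mem
                    (Finset.mem_image_of_mem _ (hPcl p hpP ⟨w, hwv⟩ hblow))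
          · push_neg at hcase
            exfalso
            have hQu : P'.image Subtype.val = univ := by
              apply hconn _ (hPne.image _)
              intro a haQ w hw
              obtain ⟨p, hpP, rfl⟩ := Finset.mem_image.mp haQ
              have hwv : w ≠ v := by
                intro h
                rw [h] at hw
                exact hw (hcase p hpP)
              have hwp : (p : V) ≠ w := fun h => hw (h ▸ hdiag p.1)
              have hblow : blowDown A v p ⟨w, hwv⟩ ≠ 0 := by
                show (if ((p : V)) = w then 0 else A p.1 w + A p.1 v * A w v) ≠ 0
                rw [if_neg hwp]
                have := Nat.pos_of_ne_zero hw
                omega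
              exact Finset.mem_image_of_mem _ (hPcl p hpP ⟨w, hwv⟩ hblow)
            have hvQ : v ∈ P'.image Subtype.val := hQu ▸ Finset.mem_univ v
            obtain ⟨p, hpP, hpv⟩ := Finset.mem_image.mp hvQ
            exact p.2 hpv
        have hIH := IH (n-1) (by omega) {u : V // u ≠ v} inferInstance inferInstance hcard'
          (blowDown A v) (fun u => R u.1) (fun u => S u.1 - ((A u.1 v : ℤ))^2)
          hsym' hdiag' (fun u => hR u.1) key2 hgcd' heq' hconn'
        -- final chaining
        have e1 : ∑ u : V, R u * (S u - 2) = (∑ u ∈ univ.erase v, R u * (S u - 2)) - R v := by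
          rw [sum_erase_eq (fun u => R u * (S u - 2)) v, hSv]; ring
        have e2 : ∑ u ∈ univ.erase v, R u * (S u - 2)
            = ∑ u ∈ univ.erase v,
                (R u * ((S u - ((A u v : ℤ))^2) - 2) + ((A u v : ℤ))^2 * R u) := by
          apply Finset.sum_congr rfl; intro u _; ring
        have e3 : R v = ∑ u ∈ univ.erase v, (A u v : ℤ) * R u := by
          rw [hRv, sum_erase_eq (fun w => (A w v : ℤ) * R w) v, hdiag v]
          push_cast; ring
        have e4 : ∑ u ∈ univ.erase v, (A u v : ℤ) * R u
            ≤ ∑ u ∈ univ.erase v, ((A u v : ℤ))^2 * R u := by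
          apply Finset.sum_le_sum
          intro u _
          have h1 : (A u v : ℤ) ≤ ((A u v : ℤ))^2 := by
            have h2 : A u v ≤ (A u v)^2 := Nat.le_self_pow (by norm_num) _
            exact_mod_cast h2
          exact mul_le_mul_of_nonneg_right h1 (le_of_lt (hR u))
        have e5 : ∑ u ∈ univ.erase v, R u * ((S u - ((A u v : ℤ))^2) - 2)
            = ∑ u : {u : V // u ≠ v}, R u.1 * ((S u.1 - ((A u.1 v : ℤ))^2) - 2) :=
          hsub _
        rw [e1, e2, Finset.sum_add_distrib]
        rw [e5] at *
        linarith [hIH, e3, e4]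


end Aux

section Vert
variable {V₁ V₂ : Type*} [Fintype V₂] [DecidableEq V₁] [DecidableEq V₂]

variable {V₁ V₂ : Type*} [Fintype V₂] [DecidableEq V₁] [DecidableEq V₂]

/-- counting pairs by first coordinate -/
lemma card_pairs {α : Type*} [Fintype α] (r : α → Prop) (t : α → α → Prop)
    [DecidablePred r] [∀ v, DecidablePred (t v)] :
    (univ.filter fun p : α × α => r p.1 ∧ t p.1 p.2).card
      = ∑ v ∈ univ.filter r, (univ.filter (t v)).card := by
  rw [Finset.card_filter, Fintype.sum_prod_type, Finset.sum_filter]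
  apply Finset.sum_congr rfl
  intro v _
  by_cases hv : r v
  · rw [if_pos hv, Finset.card_filter]
    apply Finset.sum_congr rfl
    intro w _
    simp [hv]
  · rw [if_neg hv]
    apply Finset.sum_eq_zero
    intro w _
    simp [hv]

/-- The vertical subgraph of `G₂` relative to `φ`. -/
def vertGraph (G₂ : SimpleGraph V₂) (φ : V₂ → V₁) : SimpleGraph V₂ where
  Adj v w := G₂.Adj v w ∧ φ v = φ w
  symm := ⟨fun v w h => ⟨h.1.symm, h.2.symm⟩⟩
  loopless := ⟨fun v h => G₂.loopless.irrefl v h.1⟩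

lemma vertGraph_le (G₂ : SimpleGraph V₂) (φ : V₂ → V₁) {v w : V₂}
    (h : (vertGraph G₂ φ).Reachable v w) : φ v = φ w := by
  obtain ⟨p⟩ := h
  induction p with
  | nil => rfl
  | cons h p ih => exact h.2.trans ih

lemma reach_horiz (G₂ : SimpleGraph V₂) (φ : V₂ → V₁) :
    ∀ {a b : V₂} (_ : G₂.Walk a b) (_ : φ a ≠ φ b),
      ∃ u w, (vertGraph G₂ φ).Reachable a u ∧ G₂.Adj u w ∧ φ u ≠ φ w := by
  intro a b p
  induction p with
  | nil => intro h; exact absurd rfl h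
  | @cons a c b h p ih =>
    intro hab
    by_cases hac : φ a = φ c
    · obtain ⟨u, w, hr, hadj, hne⟩ := ih (fun h => hab (hac.trans h))
      exact ⟨u, w, (SimpleGraph.Adj.reachable (show (vertGraph G₂ φ).Adj a c from ⟨h, hac⟩)).trans hr, hadj, hne⟩
    · exact ⟨a, c, SimpleGraph.Reachable.refl a, h, hac⟩

lemma reach_marked (G₂ : SimpleGraph V₂) [DecidableRel G₂.Adj] (G₁ : SimpleGraph V₁)
    (φ : V₂ → V₁) (μ : V₂ → ℕ) (hharm : IsHarmonicMorphism G₂ G₁ φ μ)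
    (hconn₂ : G₂.Connected) (hnc : ∃ v w : V₂, φ v ≠ φ w) (v : V₂) :
    ∃ u, (vertGraph G₂ φ).Reachable v u ∧ 1 ≤ μ u ∧ φ u = φ v := by
  obtain ⟨a, b, hab⟩ := hnc
  have htgt : ∃ t, φ v ≠ φ t := by
    by_cases h : φ v = φ a
    · exact ⟨b, fun hh => hab (h.symm.trans hh ▸ by rw [← h, hh])⟩
    · exact ⟨a, h⟩
  obtain ⟨t, ht⟩ := htgt
  obtain ⟨p⟩ := hconn₂ v t
  obtain ⟨u, w, hr, hadj, hne⟩ := reach_horiz G₂ φ p ht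
  have hGadj : G₁.Adj (φ u) (φ w) := (hharm.1 hadj).resolve_left hne
  have hmu : 1 ≤ μ u := by
    rw [← hharm.2 u (φ w) hGadj]
    apply Finset.card_pos.mpr
    exact ⟨w, by simp [hadj]⟩
  exact ⟨u, hr, hmu, (vertGraph_le G₂ φ hr).symm⟩


lemma fiber_nonneg (G₂ : SimpleGraph V₂) [DecidableRel G₂.Adj] (G₁ : SimpleGraph V₁)
    (φ : V₂ → V₁) (μ : V₂ → ℕ) (hharm : IsHarmonicMorphism G₂ G₁ φ μ)
    (hconn₂ : G₂.Connected) (hnc : ∃ v w : V₂, φ v ≠ φ w) (x : V₁) :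
    0 ≤ ∑ v ∈ univ.filter (fun v => φ v = x),
        (2 * (μ v : ℤ) - 2 + (vertMult G₂ φ v : ℤ)) := by
  classical
  set H := vertGraph G₂ φ with hH
  have hnev : ∀ v : V₂, (univ.filter (fun u => 1 ≤ μ u ∧ H.Reachable v u)).Nonempty := by
    intro v
    obtain ⟨u, hr, hm, -⟩ := reach_marked G₂ G₁ φ μ hharm hconn₂ hnc v
    exact ⟨u, by simp [hm, hH, hr]⟩
  set dd : V₂ → ℕ := fun v =>
    (univ.filter (fun u => 1 ≤ μ u ∧ H.Reachable v u)).inf' (hnev v) (fun u => H.dist v u)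
    with hdd
  have step : ∀ v, μ v = 0 → ∃ a, H.Adj v a ∧ φ a = φ v ∧ dd a < dd v := by
    intro v hv
    obtain ⟨u, humem, hmin⟩ := Finset.exists_mem_eq_inf' (hnev v) (fun u => H.dist v u)
    rw [Finset.mem_filter] at humem
    obtain ⟨-, hmu, hr⟩ := humem
    have hvu : v ≠ u := fun h => by rw [← h] at hmu; omega
    have hpos : 0 < H.dist v u := hr.pos_dist_of_ne hvu
    obtain ⟨p, hp⟩ := hr.exists_walk_length_eq_dist
    cases p with
    | nil => rw [← hp] at hpos; simp at hpos
    | @cons _ c _ hadj q =>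
      have hadj' : G₂.Adj v c ∧ φ v = φ c := hadj
      have hdau : H.dist c u ≤ q.length := SimpleGraph.dist_le q
      have hddc : dd c ≤ H.dist c u := by
        apply Finset.inf'_le
        simp only [Finset.mem_filter]
        exact ⟨Finset.mem_univ _, hmu, ⟨q⟩⟩
      have hlen : q.length + 1 = H.dist v u := by
        rw [← hp, SimpleGraph.Walk.length_cons]
      refine ⟨c, hadj, hadj'.2.symm, ?_⟩
      have hdv : dd v = H.dist v u := hmin
      omega
  choose nxt hadjn hphin hltn using step
  set Nxt : V₂ → V₂ := fun v => if h : μ v = 0 then nxt v h else v with hNxt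
  set F := univ.filter (fun v : V₂ => φ v = x) with hF
  set U := F.filter (fun v => μ v = 0) with hU
  set K := F.filter (fun v => ¬ μ v = 0) with hK
  set P := univ.filter (fun p : V₂ × V₂ => φ p.1 = x ∧ H.Adj p.1 p.2) with hP
  have hPcard : P.card = ∑ v ∈ F, (univ.filter (fun w => H.Adj v w)).card :=
    card_pairs (fun v => φ v = x) (fun v w => H.Adj v w)
  have hvm : ∀ v : V₂, vertMult G₂ φ v = (univ.filter (fun w => H.Adj v w)).card := by
    intro v
    unfold vertMult
    apply congrArg
    apply Finset.filter_congr
    intro w _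
    constructor
    · intro ⟨h1, h2⟩; exact ⟨h1, h2.symm⟩
    · intro h
      have h' : G₂.Adj v w ∧ φ v = φ w := h
      exact ⟨h'.1, h'.2.symm⟩
  have hsum_nu : ∑ v ∈ F, vertMult G₂ φ v = P.card := by
    rw [hPcard]; exact Finset.sum_congr rfl fun v _ => hvm v
  set P₁ := P.filter (fun p => dd p.2 < dd p.1) with hP₁
  set P₂ := P.filter (fun p => dd p.1 < dd p.2) with hP₂
  have hUP1 : U.card ≤ P₁.card := by
    apply Finset.card_le_card_of_injOn (fun v => (v, Nxt v))
    · intro v hv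
      rw [hU, Finset.mem_coe, Finset.mem_filter] at hv
      obtain ⟨hvF, hv0⟩ := hv
      rw [hF, Finset.mem_filter] at hvF
      have hNv : Nxt v = nxt v hv0 := dif_pos hv0
      simp only [hP₁, hP, Finset.mem_coe, Finset.mem_filter, Finset.mem_univ, true_and]
      rw [hNv]
      exact ⟨⟨hvF.2, hadjn v hv0⟩, hltn v hv0⟩
    · intro a _ b _ hab
      exact (Prod.ext_iff.mp hab).1
  have hUP2 : U.card ≤ P₂.card := by
    apply Finset.card_le_card_of_injOn (fun v => (Nxt v, v))
    · intro v hv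
      rw [hU, Finset.mem_coe, Finset.mem_filter] at hv
      obtain ⟨hvF, hv0⟩ := hv
      rw [hF, Finset.mem_filter] at hvF
      have hNv : Nxt v = nxt v hv0 := dif_pos hv0
      simp only [hP₂, hP, Finset.mem_coe, Finset.mem_filter, Finset.mem_univ, true_and]
      rw [hNv]
      refine ⟨⟨?_, (hadjn v hv0).symm⟩, hltn v hv0⟩
      rw [hphin v hv0, hvF.2]
    · intro a _ b _ hab
      exact (Prod.ext_iff.mp hab).2
  have hdisj : Disjoint P₁ P₂ := by
    rw [Finset.disjoint_left]
    intro p hp1 hp2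
    rw [hP₁, Finset.mem_filter] at hp1
    rw [hP₂, Finset.mem_filter] at hp2
    omega
  have hP12 : P₁.card + P₂.card ≤ P.card := by
    rw [← Finset.card_union_of_disjoint hdisj]
    apply Finset.card_le_card
    exact Finset.union_subset (Finset.filter_subset _ _) (Finset.filter_subset _ _)
  have hUK : U.card + K.card = F.card := Finset.card_filter_add_card_filter_not _
  have hKmu : K.card ≤ ∑ v ∈ F, μ v := by
    calc K.card = ∑ v ∈ K, 1 := by rw [Finset.card_eq_sum_ones]
    _ ≤ ∑ v ∈ K, μ v := Finset.sum_le_sum (fun v hv => by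
        rw [hK, Finset.mem_filter] at hv; omega)
    _ ≤ ∑ v ∈ F, μ v := Finset.sum_le_sum_of_subset (Finset.filter_subset _ _)
  have hmain : 2 * F.card ≤ 2 * (∑ v ∈ F, μ v) + ∑ v ∈ F, vertMult G₂ φ v := by
    rw [hsum_nu]
    omega
  have hcast : ((2:ℤ) * F.card) ≤ 2 * ((∑ v ∈ F, μ v : ℕ) : ℤ)
      + ((∑ v ∈ F, vertMult G₂ φ v : ℕ) : ℤ) := by exact_mod_cast hmain
  have hsplit : ∑ v ∈ F, (2*(μ v:ℤ) - 2 + (vertMult G₂ φ v:ℤ))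
      = 2 * ((∑ v ∈ F, μ v : ℕ):ℤ) - 2 * (F.card:ℤ)
        + ((∑ v ∈ F, vertMult G₂ φ v : ℕ):ℤ) := by
    rw [Finset.sum_add_distrib, Finset.sum_sub_distrib, Finset.sum_const,
      ← Finset.mul_sum, nsmul_eq_mul]
    push_cast
    ring
  rw [hsplit]
  linarith

end Vert

/-- Corollary `g1g2`. The degree of the ramification divisor is
nonnegative, and `g₂ ≥ g₁`. -/
theorem genus_comparison {V₁ V₂ : Type*} [Fintype V₁] [Fintype V₂]
    [DecidableEq V₁] [DecidableEq V₂]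
    (G₁ : SimpleGraph V₁) [DecidableRel G₁.Adj] (G₂ : SimpleGraph V₂) [DecidableRel G₂.Adj]
    (hconn₁ : G₁.Connected) (hconn₂ : G₂.Connected)
    (hcard₁ : 2 ≤ Fintype.card V₁) (hcard₂ : 2 ≤ Fintype.card V₂)
    (φ : V₂ → V₁) (μ : V₂ → ℕ)
    (hharm : IsHarmonicMorphism G₂ G₁ φ μ)
    (hnc : ∃ v w : V₂, φ v ≠ φ w)
    (R₁ S₁ : V₁ → ℤ) (hA₁ : IsArithStructure G₁ R₁ S₁)
    (d : ℕ) (hdeg : IsDegreeOf G₂ G₁ φ d)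
    (g₁ g₂ : ℤ)
    (hg₁ : 2 * g₁ - 2 = ∑ x, R₁ x * (S₁ x - 2))
    (hg₂ : 2 * g₂ - 2 =
      ∑ v, R₁ (φ v) * (((μ v : ℤ) * S₁ (φ v) + (vertMult G₂ φ v : ℤ)) - 2)) :
    0 ≤ ∑ v, R₁ (φ v) * (2 * (μ v : ℤ) - 2 + (vertMult G₂ φ v : ℤ)) ∧ g₁ ≤ g₂ := by
  classical
  obtain ⟨hmorph, hharm2⟩ := hharm
  obtain ⟨hR₁, hS₁, hgcd₁, hL₁⟩ := hA₁
  have hL : ∀ x : V₁, S₁ x * R₁ x = ∑ y ∈ G₁.neighborFinset x, R₁ y := by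
    intro x
    have h0 := congrFun hL₁ x
    simp only [arithLaplacian, Matrix.sub_mulVec, Pi.zero_apply, Pi.sub_apply,
      Matrix.mulVec_diagonal, SimpleGraph.adjMatrix_mulVec_apply, sub_eq_zero] at h0
    exact h0
  -- nonnegativity of the ramification divisor
  have hRam : 0 ≤ ∑ v, R₁ (φ v) * (2 * (μ v : ℤ) - 2 + (vertMult G₂ φ v : ℤ)) := by
    rw [← Finset.sum_fiberwise univ φ
      (fun v => R₁ (φ v) * (2 * (μ v : ℤ) - 2 + (vertMult G₂ φ v : ℤ)))]
    apply Finset.sum_nonneg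
    intro x _
    have hfac : ∑ v ∈ univ.filter (fun v => φ v = x),
          R₁ (φ v) * (2 * (μ v : ℤ) - 2 + (vertMult G₂ φ v : ℤ))
        = R₁ x * ∑ v ∈ univ.filter (fun v => φ v = x),
            (2 * (μ v : ℤ) - 2 + (vertMult G₂ φ v : ℤ)) := by
      rw [Finset.mul_sum]
      apply Finset.sum_congr rfl
      intro v hv
      rw [Finset.mem_filter] at hv
      rw [hv.2]
    rw [hfac]
    exact mul_nonneg (le_of_lt (hR₁ x))
      (fiber_nonneg G₂ G₁ φ μ ⟨hmorph, hharm2⟩ hconn₂ hnc x)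
  -- surjectivity of φ
  have hsurj : ∀ x : V₁, ∃ v, φ v = x := by
    have hstep : ∀ {x y : V₁}, G₁.Adj x y → (∃ v, φ v = x) → (∃ v, φ v = y) := by
      rintro x y hxy ⟨v, hv⟩
      obtain ⟨u, hr, hmu, hphi⟩ := reach_marked G₂ G₁ φ μ ⟨hmorph, hharm2⟩ hconn₂ hnc v
      have hadj : G₁.Adj (φ u) y := by rw [hphi, hv]; exact hxy
      have hcard := hharm2 u y hadj
      have hpos : 0 < locHorizMult G₂ φ u y := by rw [hcard]; omega
      obtain ⟨w, hw⟩ := Finset.card_pos.mp hpos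
      rw [Finset.mem_filter] at hw
      exact ⟨w, hw.2.2⟩
    have haux : ∀ {x y : V₁}, G₁.Walk x y → (∃ v, φ v = x) → (∃ v, φ v = y) := by
      intro x y p
      induction p with
      | nil => exact id
      | cons h q ih => exact fun hx => ih (hstep h hx)
    intro x
    obtain ⟨v0, -, -⟩ := hnc
    obtain ⟨p⟩ := hconn₁ (φ v0) x
    exact haux p ⟨v0, rfl⟩
  -- every vertex of Γ₁ has a neighbour
  have hnbr₁ : ∀ x : V₁, ∃ y, G₁.Adj x y := by
    intro x
    obtain ⟨z, hz⟩ := Fintype.exists_ne_of_one_lt_card (by omega) x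
    obtain ⟨p⟩ := hconn₁ x z
    cases p with
    | nil => exact absurd rfl hz
    | cons h q => exact ⟨_, h⟩
  -- fibers of μ sum to d
  have hfiberd : ∀ x : V₁, ∑ v ∈ univ.filter (fun v : V₂ => φ v = x), μ v = d := by
    intro x
    obtain ⟨y, hxy⟩ := hnbr₁ x
    rw [← hdeg hxy]
    have hpair : (univ.filter fun p : V₂ × V₂ => G₂.Adj p.1 p.2 ∧ φ p.1 = x ∧ φ p.2 = y)
        = (univ.filter fun p : V₂ × V₂ => φ p.1 = x ∧ (G₂.Adj p.1 p.2 ∧ φ p.2 = y)) := by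
      apply Finset.filter_congr
      intro p _
      constructor
      · intro ⟨h1, h2, h3⟩; exact ⟨h2, h1, h3⟩
      · intro ⟨h1, h2, h3⟩; exact ⟨h2, h1, h3⟩
    rw [hpair, card_pairs (fun v => φ v = x) (fun v w => G₂.Adj v w ∧ φ w = y)]
    apply Finset.sum_congr rfl
    intro v hv
    rw [Finset.mem_filter] at hv
    have hadj : G₁.Adj (φ v) y := by rw [hv.2]; exact hxy
    exact (hharm2 v y hadj).symm
  -- Riemann–Hurwitz
  have hRH : (2*g₂ - 2) = (d:ℤ) * (2*g₁ - 2)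
      + ∑ v, R₁ (φ v) * (2*(μ v:ℤ) - 2 + (vertMult G₂ φ v:ℤ)) := by
    rw [hg₂, hg₁]
    have hptwise : ∀ v : V₂,
        R₁ (φ v) * (((μ v:ℤ) * S₁ (φ v) + (vertMult G₂ φ v:ℤ)) - 2)
        = R₁ (φ v) * (μ v:ℤ) * (S₁ (φ v) - 2)
          + R₁ (φ v) * (2*(μ v:ℤ) - 2 + (vertMult G₂ φ v:ℤ)) := fun v => by ring
    rw [Finset.sum_congr rfl (fun v _ => hptwise v), Finset.sum_add_distrib]
    congr 1
    rw [← Finset.sum_fiberwise univ φ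
      (fun v => R₁ (φ v) * (μ v:ℤ) * (S₁ (φ v) - 2)), Finset.mul_sum]
    apply Finset.sum_congr rfl
    intro x _
    have h1 : ∑ v ∈ univ.filter (fun v => φ v = x), R₁ (φ v) * (μ v:ℤ) * (S₁ (φ v) - 2)
        = (R₁ x * (S₁ x - 2)) * ∑ v ∈ univ.filter (fun v : V₂ => φ v = x), (μ v : ℤ) := by
      rw [Finset.mul_sum]
      apply Finset.sum_congr rfl
      intro v hv
      rw [Finset.mem_filter] at hv
      rw [hv.2]; ring
    have h2 : ∑ v ∈ univ.filter (fun v : V₂ => φ v = x), (μ v:ℤ) = (d:ℤ) := by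
      rw [← Nat.cast_sum, hfiberd x]
    rw [h1, h2]; ring
  -- the pullback arithmetical structure on Γ₂
  set A₂ : V₂ → V₂ → ℕ := fun u w => if G₂.Adj u w then 1 else 0 with hA₂
  set S₂ : V₂ → ℤ := fun v => (μ v : ℤ) * S₁ (φ v) + (vertMult G₂ φ v : ℤ) with hS₂
  have hsym₂ : ∀ u w, A₂ u w = A₂ w u := by
    intro u w
    by_cases h : G₂.Adj u w
    · simp [hA₂, h, h.symm]
    · have h' : ¬ G₂.Adj w u := fun hh => h hh.symm
      simp [hA₂, h, h']
  have hdiag₂ : ∀ u, A₂ u u = 0 := by intro u; simp [hA₂]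
  have hS₂pos : ∀ v : V₂, 0 < S₂ v := by
    intro v
    obtain ⟨w, hw⟩ : ∃ w, G₂.Adj v w := by
      obtain ⟨z, hz⟩ := Fintype.exists_ne_of_one_lt_card (by omega) v
      obtain ⟨p⟩ := hconn₂ v z
      cases p with
      | nil => exact absurd rfl hz
      | cons h q => exact ⟨_, h⟩
    have h1 : (0:ℤ) ≤ (μ v : ℤ) * S₁ (φ v) := by
      have := hS₁ (φ v); positivity
    by_cases hvert : φ w = φ v
    · have hh : 0 < vertMult G₂ φ v := Finset.card_pos.mpr ⟨w, by simp [hw, hvert]⟩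
      have hh2 : (1:ℤ) ≤ (vertMult G₂ φ v : ℤ) := by exact_mod_cast hh
      simp only [hS₂]
      linarith
    · have hadj : G₁.Adj (φ v) (φ w) := (hmorph hw).resolve_left (fun hh => hvert hh.symm)
      have hmu : 1 ≤ μ v := by
        rw [← hharm2 v (φ w) hadj]
        exact Finset.card_pos.mpr ⟨w, by simp [hw]⟩
      have h2 : (1:ℤ) ≤ (μ v:ℤ) := by exact_mod_cast hmu
      have h3 : (1:ℤ) ≤ S₁ (φ v) := hS₁ _
      have h4 : (0:ℤ) ≤ (vertMult G₂ φ v : ℤ) := by positivity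
      simp only [hS₂]
      nlinarith
  have hgcd₂ : (univ : Finset V₂).gcd (fun v => R₁ (φ v)) = 1 := by
    have hdvd : (univ : Finset V₂).gcd (fun v : V₂ => R₁ (φ v)) ∣ (1:ℤ) := by
      rw [← hgcd₁]
      apply Finset.dvd_gcd
      intro x _
      obtain ⟨v, hv⟩ := hsurj x
      rw [← hv]
      exact Finset.gcd_dvd (Finset.mem_univ v)
    exact Int.eq_one_of_dvd_one (Int.nonneg_of_normalize_eq_self Finset.normalize_gcd) hdvd
  have heq₂ : ∀ v : V₂, S₂ v * R₁ (φ v) = ∑ w, (A₂ v w : ℤ) * R₁ (φ w) := by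
    intro v
    have hfib : ∑ w, (A₂ v w : ℤ) * R₁ (φ w)
        = ∑ x : V₁, ∑ w ∈ univ.filter (fun w => φ w = x), (A₂ v w : ℤ) * R₁ (φ w) :=
      (Finset.sum_fiberwise univ φ _).symm
    have hinner : ∀ x : V₁, ∑ w ∈ univ.filter (fun w : V₂ => φ w = x), (A₂ v w : ℤ) * R₁ (φ w)
        = (locHorizMult G₂ φ v x : ℤ) * R₁ x := by
      intro x
      have ha : ∑ w ∈ univ.filter (fun w : V₂ => φ w = x), (A₂ v w : ℤ) * R₁ (φ w)
          = ∑ w ∈ univ.filter (fun w : V₂ => φ w = x), (if G₂.Adj v w then R₁ x else 0) := by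
        apply Finset.sum_congr rfl
        intro w hw
        rw [Finset.mem_filter] at hw
        simp only [hA₂]
        by_cases h : G₂.Adj v w
        · rw [if_pos h, if_pos h, hw.2]; push_cast; ring
        · rw [if_neg h, if_neg h]; push_cast; ring
      rw [ha, ← Finset.sum_filter, Finset.filter_filter, Finset.sum_const, nsmul_eq_mul]
      congr 2
      apply congrArg
      apply Finset.filter_congr
      intro w _
      constructor
      · intro ⟨h1', h2'⟩; exact ⟨h2', h1'⟩
      · intro ⟨h1', h2'⟩; exact ⟨h2', h1'⟩
    rw [hfib, Finset.sum_congr rfl (fun x _ => hinner x)]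
    have herase : ∑ x ∈ univ.erase (φ v), (locHorizMult G₂ φ v x : ℤ) * R₁ x
        = (μ v : ℤ) * (S₁ (φ v) * R₁ (φ v)) := by
      have h2 : ∀ x ∈ univ.erase (φ v), (locHorizMult G₂ φ v x : ℤ) * R₁ x
          = (μ v:ℤ) * (if G₁.Adj (φ v) x then R₁ x else 0) := by
        intro x hx
        have hxne : x ≠ φ v := Finset.ne_of_mem_erase hx
        by_cases hadj : G₁.Adj (φ v) x
        · rw [if_pos hadj, hharm2 v x hadj]
        · rw [if_neg hadj]
          have h0 : locHorizMult G₂ φ v x = 0 := by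
            apply Finset.card_eq_zero.mpr
            rw [Finset.filter_eq_empty_iff]
            rintro w - ⟨h1', h2'⟩
            rcases hmorph h1' with h | h
            · rw [h2'] at h; exact hxne h.symm
            · rw [h2'] at h; exact hadj h
          rw [h0]; push_cast; ring
      rw [Finset.sum_congr rfl h2, ← Finset.mul_sum]
      congr 1
      have h3 : ∑ x ∈ univ.erase (φ v), (if G₁.Adj (φ v) x then R₁ x else 0)
          = ∑ x : V₁, (if G₁.Adj (φ v) x then R₁ x else 0) := by
        rw [sum_erase_eq (fun x => if G₁.Adj (φ v) x then R₁ x else 0) (φ v)]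
        simp [SimpleGraph.irrefl]
      rw [h3, ← Finset.sum_filter, hL (φ v)]
      congr 1
      exact (SimpleGraph.neighborFinset_eq_filter G₁).symm
    have h4 := sum_erase_eq (fun x => (locHorizMult G₂ φ v x : ℤ) * R₁ x) (φ v)
    rw [herase] at h4
    have hterm : locHorizMult G₂ φ v (φ v) = vertMult G₂ φ v := rfl
    rw [hterm] at h4
    simp only [hS₂]
    linear_combination h4
  have hconnM : ConnMat A₂ := by
    intro P hPne hPcl
    obtain ⟨p0, hp0⟩ := hPne
    have haux : ∀ {a b : V₂}, G₂.Walk a b → a ∈ P → b ∈ P := by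
      intro a b p
      induction p with
      | nil => exact id
      | cons h q ih =>
        intro ha
        apply ih
        apply hPcl _ ha
        simp [hA₂, h]
    apply Finset.eq_univ_of_forall
    intro w
    obtain ⟨p⟩ := hconn₂ p0 w
    exact haux p hp0
  have hlor := lorenzini (Fintype.card V₂) V₂ inferInstance inferInstance rfl A₂
    (fun v => R₁ (φ v)) S₂ hsym₂ hdiag₂ (fun v => hR₁ (φ v)) hS₂pos hgcd₂ heq₂ hconnM
  have hg₂' : 2*g₂ - 2 = ∑ v, R₁ (φ v) * (S₂ v - 2) := by
    rw [hg₂]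
    try (apply Finset.sum_congr rfl; intro v _; simp only [hS₂])
  have hd1 : 1 ≤ d := by
    obtain ⟨a, b, hab⟩ := hnc
    obtain ⟨p⟩ := hconn₂ a b
    obtain ⟨u, w, hr, hadj, hneq⟩ := reach_horiz G₂ φ p hab
    have hGadj : G₁.Adj (φ u) (φ w) := (hmorph hadj).resolve_left hneq
    rw [← hdeg hGadj]
    exact Finset.card_pos.mpr ⟨(u,w), by simp [hadj]⟩
  refine ⟨hRam, ?_⟩
  have hg₂0 : 0 ≤ g₂ := by linarith [hlor, hg₂'.symm ▸ hlor]
  rcases le_or_gt g₁ 0 with h | h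
  · linarith
  · have h1 : 1 ≤ g₁ := h
    have hd1' : (1:ℤ) ≤ (d:ℤ) := by exact_mod_cast hd1
    have hmono : (0:ℤ) ≤ ((d:ℤ) - 1) * (2*g₁ - 2) :=
      mul_nonneg (by linarith) (by linarith)
    linarith [hRH, hRam]
end
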